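/- arXiv:1311.2705 — 4 statements merged into one kernel-verified Lean document; each statement's English description precedes it below -/
import Mathlib

section
/- Let q = 2^{2t+1} be an odd power of 2, F = 𝔽_{q²}, n = 3q² − 2q, and let (a₁,b₁),…,(a_n,b_n) be an enumeration of all pairs in F × F with (b_k)^q + b_k = (a_k)³. For a nonnegative integer m let C_m ⊆ F^n be the F-linear span of the vectors ((a_k)^i (b_k)^j)_{k=1,…,n} over all pairs (i,j) of nonnegative integers with j ≤ q − 1 and qi + 3j ≤ m. Then for every integer m with 0 ≤ m ≤ 3q² − 4, the Euclidean dual of C_m equals C_{3q²−4−m}, i.e. {v ∈ F^n : Σ_{k=1}^n v_k c_k = 0 for all c ∈ C_m} = C_{3q²−4−m}. -/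
open Finset

set_option linter.unusedSectionVars false
variable {F : Type} [Field F] [Fintype F]

lemma aux_char_two {q : ℕ} (e : ℕ) (hq : q = 2 ^ e)
    (hF : Fintype.card F = q ^ 2) : CharP F 2 := by
  haveI := ringChar.charP F
  have hp : (ringChar F).Prime := CharP.char_is_prime F _
  have hcast : ((Fintype.card F : ℕ) : F) = 0 := FiniteField.cast_card_eq_zero F
  have hdvd : ringChar F ∣ Fintype.card F := (CharP.cast_eq_zero_iff F _ _).mp hcast
  rw [hF, hq, ← pow_mul] at hdvd
  have h2 : ringChar F = 2 :=
    (Nat.prime_dvd_prime_iff_eq hp Nat.prime_two).mp (hp.dvd_of_dvd_pow hdvd)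
  exact ringChar.of_eq h2

lemma aux_exists_order (d : ℕ) (hd0 : 0 < d) (hd : d ∣ Fintype.card F - 1) :
    ∃ u : F, u ≠ 0 ∧ ∀ l : ℕ, (u ^ l = 1 ↔ d ∣ l) := by
  classical
  obtain ⟨g, hg⟩ := IsCyclic.exists_generator (α := Fˣ)
  have hcard : orderOf g = Fintype.card F - 1 := by
    rw [orderOf_eq_card_of_forall_mem_zpowers hg, Nat.card_eq_fintype_card, Fintype.card_units]
  set N := Fintype.card F - 1 with hN
  have hN0 : 0 < N := by
    have : 1 < Fintype.card F := Fintype.one_lt_card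
    omega
  have hdvd' : N / d ∣ N := Nat.div_dvd_of_dvd hd
  have horder : orderOf (g ^ (N / d)) = d := by
    rw [orderOf_pow, hcard, Nat.gcd_eq_right hdvd', Nat.div_div_self hd (by omega)]
  refine ⟨((g ^ (N / d) : Fˣ) : F), Units.ne_zero _, fun l => ?_⟩
  have h1 : ((g ^ (N / d)) ^ l = 1) ↔ d ∣ l := by
    rw [← orderOf_dvd_iff_pow_eq_one, horder]
  have hval : ((g ^ (N / d) : Fˣ) : F) ^ l = (((g ^ (N / d)) ^ l : Fˣ) : F) :=
    (Units.val_pow_eq_pow_val _ _).symm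
  rw [hval, Units.val_eq_one]
  exact h1

lemma aux_sum_pow_zero (S : Finset F) (u : F) (hu0 : u ≠ 0)
    (hS : ∀ c ∈ S, u * c ∈ S) (hS' : ∀ c ∈ S, u⁻¹ * c ∈ S)
    {l : ℕ} (hul : u ^ l ≠ 1) : ∑ c ∈ S, c ^ l = 0 := by
  have key : ∑ c ∈ S, c ^ l = u ^ l * ∑ c ∈ S, c ^ l := by
    rw [Finset.mul_sum]
    refine Finset.sum_nbij' (fun c => u⁻¹ * c) (fun c => u * c) hS' hS ?_ ?_ ?_
    · intro a _; field_simp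
    · intro a _; field_simp
    · intro a _
      rw [mul_pow, inv_pow]
      field_simp
  have h2 : (1 - u ^ l) * ∑ c ∈ S, c ^ l = 0 := by ring_nf; linear_combination key
  rcases mul_eq_zero.mp h2 with h | h
  · exact absurd (by linear_combination -h) hul
  · exact h

lemma aux_choose_zero {q : ℕ} (e : ℕ) (hq : q = 2 ^ e) [CharP F 2]
    (s : ℕ) (hs : s < q - 1) (hq2 : 2 ≤ q) : ((q + s).choose (q - 1) : F) = 0 := by
  haveI : Fact (Nat.Prime 2) := ⟨Nat.prime_two⟩
  have h1 : (((Polynomial.X + 1 : Polynomial F) ^ (q + s)).coeff (q-1)) = ((q+s).choose (q-1) : F) :=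
    Polynomial.coeff_X_add_one_pow F _ _
  have hfrob : (Polynomial.X + 1 : Polynomial F) ^ q = Polynomial.X ^ q + 1 := by
    subst hq
    rw [add_pow_char_pow]
    simp
  have h2 : (Polynomial.X + 1 : Polynomial F) ^ (q + s)
      = (Polynomial.X + 1) ^ s * Polynomial.X ^ q + (Polynomial.X + 1) ^ s := by
    rw [pow_add, hfrob]; ring
  rw [h2] at h1
  rw [Polynomial.coeff_add, Polynomial.coeff_mul_X_pow'] at h1
  rw [if_neg (by omega), Polynomial.coeff_X_add_one_pow] at h1
  rw [← h1, zero_add, Nat.choose_eq_zero_of_lt (by omega), Nat.cast_zero]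

lemma aux_master (t q : ℕ) (hq : q = 2 ^ (2 * t + 1))
    (F : Type) [Field F] [Fintype F] (hF : Fintype.card F = q ^ 2)
    (n : ℕ) (hn : n = 3 * q ^ 2 - 2 * q)
    (pt : Fin n → F × F) (hinj : Function.Injective pt)
    (hrange : ∀ p : F × F, p ∈ Set.range pt ↔ p.2 ^ q + p.2 = p.1 ^ 3) :
    ∀ s r : ℕ, r ≤ 2 * q - 2 →
      ∑ k : Fin n, (pt k).1 ^ s * (pt k).2 ^ r
        = if (r = q - 1 ∨ r = 2 * q - 2) ∧ (s ≠ 0 ∧ (3 * q - 3) ∣ s) then 1 else 0 := by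
  classical
  haveI hchar : CharP F 2 := aux_char_two (2*t+1) hq hF
  have hq2 : 2 ≤ q := by
    rw [hq]
    calc 2 = 2 ^ 1 := rfl
    _ ≤ 2 ^ (2*t+1) := Nat.pow_le_pow_right (by norm_num) (by omega)
  have h2dvdq : 2 ∣ q := ⟨2 ^ (2*t), by rw [hq]; ring⟩
  have h2F : (2 : F) = 0 := by exact_mod_cast (CharP.cast_eq_zero F 2)
  have hcast2 : ∀ nn : ℕ, 2 ∣ nn → (nn : F) = 0 :=
    fun nn h => (CharP.cast_eq_zero_iff F 2 nn).mpr h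
  have hcast_odd : ∀ nn : ℕ, nn % 2 = 1 → (nn : F) = 1 := by
    intro nn h
    have h1 : nn = (nn - 1) + 1 := by omega
    rw [h1, Nat.cast_add, Nat.cast_one, hcast2 (nn-1) (by omega), zero_add]
  have hqF : (q : F) = 0 := hcast2 q h2dvdq
  haveI : Fact (Nat.Prime 2) := ⟨Nat.prime_two⟩
  have hfrobx : ∀ x y : F, (x + y) ^ q = x ^ q + y ^ q := by
    intro x y
    rw [hq]
    exact add_pow_char_pow x y 2 (2*t+1)
  have hpow_card : ∀ x : F, x ^ (q * q) = x := by
    intro x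
    have h := FiniteField.pow_card x
    rwa [hF, pow_two] at h
  -- the finsets
  set Kset : Finset F := univ.filter (fun c => c ^ q = c) with hKdef
  set A : Finset F := univ.filter (fun a => a ^ (3*q) = a ^ 3) with hAdef
  set μs : Finset F := univ.filter (fun a => a ^ (3*q-3) = 1) with hμdef
  set fib : F → Finset F := fun y => univ.filter (fun b => b ^ q + b = y) with hfibdef
  set Vfin : Finset (F × F) := univ.filter (fun p => p.2 ^ q + p.2 = p.1 ^ 3) with hVdef
  have hbij : ∀ {M : Type} [AddCommMonoid M] (f : F × F → M),
      ∑ k : Fin n, f (pt k) = ∑ p ∈ Vfin, f p := by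
    intro M _ f
    refine Finset.sum_bij (fun k _ => pt k) ?_ ?_ ?_ ?_
    · intro a _
      rw [hVdef, mem_filter]
      exact ⟨mem_univ _, (hrange (pt a)).mp ⟨a, rfl⟩⟩
    · intro a _ b _ h; exact hinj h
    · intro p hp
      rw [hVdef, mem_filter] at hp
      obtain ⟨k, hk⟩ := (hrange p).mpr hp.2
      exact ⟨k, mem_univ _, hk⟩
    · intro a _; rfl
  have hsplit : ∀ {M : Type} [AddCommMonoid M] (f : F × F → M),
      ∑ p ∈ Vfin, f p = ∑ a : F, ∑ b ∈ fib (a^3), f (a, b) := by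
    intro M _ f
    rw [hVdef, Finset.sum_filter, Fintype.sum_prod_type]
    refine Finset.sum_congr rfl (fun a _ => ?_)
    rw [hfibdef]
    simp only [Finset.sum_filter]
  have hfib_mem : ∀ (y b : F), b ∈ fib y ↔ b ^ q + b = y := by
    intro y b; rw [hfibdef]; simp [mem_filter]
  have hK_mem : ∀ c : F, c ∈ Kset ↔ c ^ q = c := by
    intro c; rw [hKdef]; simp [mem_filter]
  have hfib_coset : ∀ (y : F) (β : F), β ∈ fib y → fib y = Kset.image (fun c => β + c) := by
    intro y β hβ
    have hβy : β ^ q + β = y := (hfib_mem y β).mp hβ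
    ext b
    rw [hfib_mem, mem_image]
    constructor
    · intro hb
      refine ⟨β + b, ?_, ?_⟩
      · rw [hK_mem]
        have hfr : (β + b) ^ q = β ^ q + b ^ q := hfrobx β b
        linear_combination hfr + hβy + hb + (y - β - b) * h2F
      · linear_combination β * h2F
    · rintro ⟨c, hc, rfl⟩
      rw [hK_mem] at hc
      have hfr : (β + c) ^ q = β ^ q + c ^ q := hfrobx β c
      linear_combination hfr + hc + hβy + c * h2F
  have hfib_card : ∀ y : F, (fib y).card = if (fib y).Nonempty then Kset.card else 0 := by
    intro y
    split_ifs with h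
    · obtain ⟨β, hβ⟩ := h
      rw [hfib_coset y β hβ, Finset.card_image_of_injective _ (add_right_injective β)]
    · rw [Finset.not_nonempty_iff_eq_empty.mp h, Finset.card_empty]
  have hK0 : (0:F) ∈ Kset := by rw [hK_mem]; exact zero_pow (by omega)
  have hKcard_le : Kset.card ≤ q := by
    set P : Polynomial F := Polynomial.X ^ q + Polynomial.X with hPdef
    have hPcoeff : P.coeff q = 1 := by
      rw [hPdef, Polynomial.coeff_add, Polynomial.coeff_X_pow, if_pos rfl,
        Polynomial.coeff_X, if_neg (by omega)]
      ring
    have hPne : P ≠ 0 := fun h => by simp [h] at hPcoeff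
    have hdeg : P.natDegree ≤ q := by
      refine le_trans (Polynomial.natDegree_add_le _ _) ?_
      simp [Polynomial.natDegree_X_pow, Polynomial.natDegree_X]
      omega
    have hsub : Kset ⊆ P.roots.toFinset := by
      intro c hc
      rw [hK_mem] at hc
      rw [Multiset.mem_toFinset, Polynomial.mem_roots']
      refine ⟨hPne, ?_⟩
      show P.eval c = 0
      rw [hPdef]
      simp only [Polynomial.eval_add, Polynomial.eval_pow, Polynomial.eval_X]
      linear_combination hc + c * h2F
    calc Kset.card ≤ P.roots.toFinset.card := Finset.card_le_card hsub
      _ ≤ Multiset.card P.roots := Multiset.toFinset_card_le _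
      _ ≤ P.natDegree := Polynomial.card_roots' P
      _ ≤ q := hdeg
  have hμ_mem : ∀ a : F, a ∈ μs ↔ a ^ (3*q-3) = 1 := by
    intro a; rw [hμdef]; simp [mem_filter]
  have hμcard_le : μs.card ≤ 3*q-3 := by
    set P : Polynomial F := Polynomial.X ^ (3*q-3) + 1 with hPdef
    have hPcoeff : P.coeff 0 = 1 := by
      rw [hPdef, Polynomial.coeff_add, Polynomial.coeff_X_pow, if_neg (by omega)]
      simp
    have hPne : P ≠ 0 := fun h => by simp [h] at hPcoeff
    have hdeg : P.natDegree ≤ 3*q-3 := by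
      refine le_trans (Polynomial.natDegree_add_le _ _) ?_
      simp [Polynomial.natDegree_X_pow, Polynomial.natDegree_one]
    have hsub : μs ⊆ P.roots.toFinset := by
      intro c hc
      rw [hμ_mem] at hc
      rw [Multiset.mem_toFinset, Polynomial.mem_roots']
      refine ⟨hPne, ?_⟩
      show P.eval c = 0
      rw [hPdef]
      simp only [Polynomial.eval_add, Polynomial.eval_pow, Polynomial.eval_X,
        Polynomial.eval_one]
      linear_combination hc + h2F
    calc μs.card ≤ P.roots.toFinset.card := Finset.card_le_card hsub
      _ ≤ Multiset.card P.roots := Multiset.toFinset_card_le _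
      _ ≤ P.natDegree := Polynomial.card_roots' P
      _ ≤ 3*q-3 := hdeg
  have hA_mem : ∀ a : F, a ∈ A ↔ a ^ (3*q) = a ^ 3 := by
    intro a; rw [hAdef]; simp [mem_filter]
  have h0μ : (0:F) ∉ μs := by
    rw [hμ_mem, zero_pow (by omega)]
    exact zero_ne_one
  have hA_eq : A = insert (0:F) μs := by
    ext a
    rw [hA_mem, mem_insert, hμ_mem]
    constructor
    · intro ha
      by_cases ha0 : a = 0
      · exact Or.inl ha0
      · right
        have h1 : a ^ (3*q-3) * a ^ 3 = a ^ (3*q) := by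
          rw [← pow_add]; congr 1; omega
        rw [ha] at h1
        have h2 : a ^ (3*q-3) * a ^ 3 = 1 * a ^ 3 := by rw [h1, one_mul]
        exact mul_right_cancel₀ (pow_ne_zero _ ha0) h2
    · rintro (rfl | hμ)
      · rw [zero_pow (by omega : 3*q ≠ 0), zero_pow (by omega : (3:ℕ) ≠ 0)]
      · have h1 : a ^ (3*q-3) * a ^ 3 = a ^ (3*q) := by
          rw [← pow_add]; congr 1; omega
        rw [hμ, one_mul] at h1
        exact h1.symm
  have hAcard : A.card = μs.card + 1 := by
    rw [hA_eq, Finset.card_insert_of_notMem h0μ]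
  set A' : Finset F := univ.filter (fun a : F => (fib (a^3)).Nonempty) with hA'def
  have hA'A : A' ⊆ A := by
    intro a ha
    rw [hA'def, mem_filter] at ha
    obtain ⟨β, hβ⟩ := ha.2
    have hβy : β ^ q + β = a ^ 3 := (hfib_mem _ β).mp hβ
    rw [hA_mem]
    have h1 : (a ^ 3) ^ q = a ^ 3 := by
      rw [← hβy, hfrobx]
      have h2 : (β ^ q) ^ q = β := by rw [← pow_mul]; exact hpow_card β
      rw [h2]
      ring
    rw [← pow_mul, mul_comm] at h1
    rwa [mul_comm] at h1
  have hcount : n = A'.card * Kset.card := by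
    have h1 : (n : ℕ) = ∑ k : Fin n, (1:ℕ) := by simp
    rw [h1, hbij (f := fun _ => (1:ℕ)), hsplit (f := fun _ => (1:ℕ))]
    have h2 : ∀ a : F, ∑ _b ∈ fib (a^3), (1:ℕ) = if (fib (a^3)).Nonempty then Kset.card else 0 := by
      intro a
      rw [Finset.sum_const, smul_eq_mul, mul_one]
      exact hfib_card _
    rw [Finset.sum_congr rfl (fun a _ => h2 a), ← Finset.sum_filter, ← hA'def,
      Finset.sum_const, smul_eq_mul]
  have hsq : q ^ 2 - 1 = (q-1) * (q+1) := by
    obtain ⟨x, hx⟩ : ∃ x, q = x + 2 := ⟨q - 2, by omega⟩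
    rw [hx]
    have e1 : x + 2 - 1 = x + 1 := by omega
    rw [e1]
    have e2 : (x+2)^2 = (x+1)*(x+2+1) + 1 := by ring
    omega
  have hnmul : n = (3*q-2) * q := by
    rw [hn, Nat.sub_mul]
    have : 3 * q * q = 3 * q^2 := by ring
    omega
  have hKq : Kset.card = q := by
    by_contra h
    have hK' : Kset.card < q := lt_of_le_of_ne hKcard_le h
    have hA'le : A'.card ≤ 3*q-2 := le_trans (Finset.card_le_card hA'A) (by omega)
    have hlt : A'.card * Kset.card < (3*q-2) * q := by
      calc A'.card * Kset.card ≤ (3*q-2) * Kset.card := Nat.mul_le_mul_right _ hA'le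
        _ < (3*q-2) * q := mul_lt_mul_of_pos_left hK' (by omega)
    rw [← hcount, hnmul] at hlt
    exact lt_irrefl _ hlt
  have hA'card : A'.card = 3*q-2 := by
    have h1 : A'.card * Kset.card = (3*q-2) * q := by rw [← hcount]; exact hnmul
    rw [hKq] at h1
    exact Nat.eq_of_mul_eq_mul_right (by omega) h1
  have hA'_eq : A' = A := by
    refine Finset.eq_of_subset_of_card_le hA'A ?_
    rw [hA'card]
    omega
  have hAcard' : A.card = 3*q-2 := by rw [← hA'_eq, hA'card]
  have hμcard : μs.card = 3*q-3 := by omega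
  have hfib_ne : ∀ a : F, a ∈ A → (fib (a^3)).Nonempty := by
    intro a ha
    rw [← hA'_eq, hA'def, mem_filter] at ha
    exact ha.2
  have hfib_empty : ∀ a : F, a ∉ A → fib (a^3) = ∅ := by
    intro a ha
    rw [← Finset.not_nonempty_iff_eq_empty]
    intro hne
    exact ha (hA'A (by rw [hA'def, mem_filter]; exact ⟨mem_univ _, hne⟩))
  have hKq1 : ∀ c : F, c ∈ Kset → c ≠ 0 → c ^ (q-1) = 1 := by
    intro c hc hc0
    rw [hK_mem] at hc
    have h1 : c ^ (q-1) * c = c ^ q := by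
      rw [← pow_succ]; congr 1; omega
    rw [hc] at h1
    have h2 : c ^ (q-1) * c = 1 * c := by rw [h1, one_mul]
    exact mul_right_cancel₀ hc0 h2
  have hq1dvd : (q-1) ∣ Fintype.card F - 1 := by
    rw [hF, hsq]
    exact Dvd.intro _ rfl
  have hPK : ∀ l : ℕ, ∑ c ∈ Kset, c ^ l = if l ≠ 0 ∧ (q-1) ∣ l then 1 else 0 := by
    intro l
    by_cases hl0 : l = 0
    · subst hl0
      rw [if_neg (by simp)]
      simp only [pow_zero, Finset.sum_const, nsmul_eq_mul, mul_one]
      rw [hKq, hqF]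
    · by_cases hdl : (q-1) ∣ l
      · rw [if_pos ⟨hl0, hdl⟩]
        obtain ⟨w, hw⟩ := hdl
        rw [← Finset.sum_erase_add Kset _ hK0, zero_pow hl0, add_zero]
        have h1 : ∀ c ∈ Kset.erase 0, c ^ l = 1 := by
          intro c hc
          rw [Finset.mem_erase] at hc
          rw [hw, pow_mul, hKq1 c hc.2 hc.1, one_pow]
        rw [Finset.sum_congr rfl h1, Finset.sum_const, nsmul_eq_mul, mul_one,
          Finset.card_erase_of_mem hK0, hKq]
        exact hcast_odd _ (by omega)
      · rw [if_neg (by tauto)]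
        obtain ⟨u, hu0, hu⟩ := aux_exists_order (q-1) (by omega) hq1dvd
        have huq : u ^ q = u := by
          have h1 : u ^ (q-1) = 1 := (hu (q-1)).mpr dvd_rfl
          have h2 : u ^ q = u ^ (q-1) * u := by rw [← pow_succ]; congr 1; omega
          rw [h2, h1, one_mul]
        refine aux_sum_pow_zero Kset u hu0 ?_ ?_ (fun h => hdl ((hu l).mp h))
        · intro c hc
          rw [hK_mem] at hc ⊢
          rw [mul_pow, huq, hc]
        · intro c hc
          rw [hK_mem] at hc ⊢
          rw [mul_pow, inv_pow, huq, hc]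
  have h3dvdq1 : 3 ∣ q + 1 := by
    rw [hq]
    clear_value Kset A μs fib Vfin
    clear * -
    induction t with
    | zero => decide
    | succ t ih =>
      have h1 : 2^(2*(t+1)+1) = 4 * 2^(2*t+1) := by ring
      omega
  have h3dvd : (3*q-3) ∣ Fintype.card F - 1 := by
    rw [hF, hsq]
    obtain ⟨w, hw⟩ := h3dvdq1
    refine ⟨w, ?_⟩
    have e1 : 3*q-3 = 3*(q-1) := by omega
    rw [hw, e1]
    ring
  have hPA : ∀ s : ℕ, ∑ a ∈ A, a ^ s = if s ≠ 0 ∧ (3*q-3) ∣ s then 1 else 0 := by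
    intro s
    rw [hA_eq, Finset.sum_insert h0μ]
    by_cases hs0 : s = 0
    · subst hs0
      rw [if_neg (by simp)]
      simp only [pow_zero, Finset.sum_const, nsmul_eq_mul, mul_one]
      rw [hμcard, hcast_odd (3*q-3) (by omega)]
      linear_combination h2F
    · rw [zero_pow hs0, zero_add]
      by_cases hds : (3*q-3) ∣ s
      · rw [if_pos ⟨hs0, hds⟩]
        obtain ⟨w, hw⟩ := hds
        have h1 : ∀ a ∈ μs, a ^ s = 1 := by
          intro a ha
          rw [hμ_mem] at ha
          rw [hw, pow_mul, ha, one_pow]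
        rw [Finset.sum_congr rfl h1, Finset.sum_const, nsmul_eq_mul, mul_one, hμcard]
        exact hcast_odd _ (by omega)
      · rw [if_neg (by tauto)]
        obtain ⟨u, hu0, hu⟩ := aux_exists_order (3*q-3) (by omega) h3dvd
        have huμ : u ^ (3*q-3) = 1 := (hu (3*q-3)).mpr dvd_rfl
        refine aux_sum_pow_zero μs u hu0 ?_ ?_ (fun h => hds ((hu s).mp h))
        · intro c hc
          rw [hμ_mem] at hc ⊢
          rw [mul_pow, huμ, hc, one_mul]
        · intro c hc
          rw [hμ_mem] at hc ⊢
          rw [mul_pow, inv_pow, huμ, inv_one, hc, one_mul]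
  have hchoose : ∀ r : ℕ, q ≤ r → r ≤ 2*q-2 → ((r.choose (q-1)) : F) = 0 := by
    intro r h1 h2
    have h3 : r = q + (r - q) := by omega
    rw [h3]
    exact aux_choose_zero (2*t+1) hq (r-q) (by omega) hq2
  have hT : ∀ (y : F) (r : ℕ), r ≤ 2*q-2 → (fib y).Nonempty →
      ∑ b ∈ fib y, b ^ r = if r = q-1 ∨ r = 2*q-2 then 1 else 0 := by
    intro y r hr hne
    obtain ⟨β, hβ⟩ := hne
    rw [hfib_coset y β hβ,
      Finset.sum_image (fun a _ b _ h => add_left_cancel h)]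
    have hexp : ∀ c ∈ Kset, (β + c) ^ r
        = ∑ l ∈ range (r+1), (β ^ l * (r.choose l : F)) * c ^ (r-l) := by
      intro c _
      rw [add_pow]
      exact Finset.sum_congr rfl (fun l _ => by ring)
    rw [Finset.sum_congr rfl hexp, Finset.sum_comm]
    have hterm : ∀ l ∈ range (r+1),
        ∑ c ∈ Kset, (β ^ l * (r.choose l : F)) * c ^ (r-l)
          = (β ^ l * (r.choose l : F)) * (if r - l ≠ 0 ∧ (q-1) ∣ (r - l) then 1 else 0) := by
      intro l _
      rw [← Finset.mul_sum, hPK]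
    rw [Finset.sum_congr rfl hterm]
    have hzero : ∀ l ∈ range (r+1), l ≠ 0 →
        (β ^ l * (r.choose l : F)) * (if r - l ≠ 0 ∧ (q-1) ∣ (r - l) then 1 else 0) = 0 := by
      intro l hl hl0
      rw [mem_range] at hl
      by_cases hc : r - l ≠ 0 ∧ (q-1) ∣ (r - l)
      · obtain ⟨hd0, k, hk⟩ := hc
        have hk1 : k ≠ 0 := by rintro rfl; omega
        have hk2 : k < 2 := by
          by_contra hk2
          have : 2 * (q-1) ≤ (q-1) * k := by
            calc 2 * (q-1) = (q-1) * 2 := by ring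
            _ ≤ (q-1) * k := Nat.mul_le_mul_left _ (by omega)
          omega
        have hkk : k = 1 := by omega
        rw [hkk, mul_one] at hk
        -- r - l = q - 1, l ≠ 0 so r ≥ q
        have hlval : l = r - (q-1) := by omega
        have hrq : q ≤ r := by omega
        have hch : (r.choose l : F) = 0 := by
          rw [hlval, Nat.choose_symm (by omega)]
          exact hchoose r hrq hr
        rw [hch, mul_zero, zero_mul]
      · rw [if_neg hc, mul_zero]
    rw [Finset.sum_eq_single_of_mem 0 (mem_range.mpr (by omega)) hzero]
    rw [pow_zero, Nat.choose_zero_right, Nat.cast_one, mul_one, one_mul, Nat.sub_zero]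
    congr 1
    have hiff : (r ≠ 0 ∧ (q-1) ∣ r) ↔ (r = q-1 ∨ r = 2*q-2) := by
      constructor
      · rintro ⟨h0, k, hk⟩
        have hk1 : k ≠ 0 := by rintro rfl; omega
        have hk2 : k < 3 := by
          by_contra hk2
          have : 3 * (q-1) ≤ (q-1) * k := by
            calc 3 * (q-1) = (q-1) * 3 := by ring
            _ ≤ (q-1) * k := Nat.mul_le_mul_left _ (by omega)
          omega
        interval_cases k <;> omega
      · rintro (rfl | rfl)
        · exact ⟨by omega, dvd_rfl⟩
        · exact ⟨by omega, ⟨2, by omega⟩⟩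
    simp only [eq_iff_iff]
    exact hiff
  -- final assembly
  intro s r hr
  rw [hbij (f := fun p => p.1 ^ s * p.2 ^ r), hsplit (f := fun p => p.1 ^ s * p.2 ^ r)]
  have h1 : ∀ a : F, ∑ b ∈ fib (a^3), a ^ s * b ^ r = a ^ s * ∑ b ∈ fib (a^3), b ^ r :=
    fun a => (Finset.mul_sum _ _ _).symm
  rw [Finset.sum_congr rfl (fun a _ => h1 a)]
  have h2 : ∑ a : F, a ^ s * ∑ b ∈ fib (a^3), b ^ r
      = ∑ a ∈ A, a ^ s * ∑ b ∈ fib (a^3), b ^ r := by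
    refine (Finset.sum_subset (Finset.subset_univ A) ?_).symm
    intro a _ ha
    rw [hfib_empty a ha, Finset.sum_empty, mul_zero]
  rw [h2]
  have h3 : ∀ a ∈ A, a ^ s * ∑ b ∈ fib (a^3), b ^ r
      = a ^ s * (if r = q-1 ∨ r = 2*q-2 then 1 else 0) := by
    intro a ha
    rw [hT (a^3) r hr (hfib_ne a ha)]
  rw [Finset.sum_congr rfl h3]
  by_cases hcr : r = q-1 ∨ r = 2*q-2
  · rw [if_pos hcr]
    simp only [mul_one]
    rw [hPA s]
    by_cases hcs : s ≠ 0 ∧ (3*q-3) ∣ s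
    · rw [if_pos hcs, if_pos ⟨hcr, hcs⟩]
    · rw [if_neg hcs, if_neg (by tauto)]
  · rw [if_neg hcr]
    simp only [mul_zero, Finset.sum_const_zero]
    rw [if_neg (by tauto)]

set_option maxHeartbeats 1600000 in
theorem second_curve_euclidean_dual (t : ℕ) (q : ℕ) (hq : q = 2 ^ (2 * t + 1))
    (F : Type) [Field F] [Fintype F] (hF : Fintype.card F = q ^ 2)
    (n : ℕ) (hn : n = 3 * q ^ 2 - 2 * q)
    (pt : Fin n → F × F) (hinj : Function.Injective pt)
    (hrange : ∀ p : F × F, p ∈ Set.range pt ↔ p.2 ^ q + p.2 = p.1 ^ 3)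
    (C : ℕ → Submodule F (Fin n → F))
    (hC : ∀ m : ℕ, C m = Submodule.span F
      {v : Fin n → F | ∃ i j : ℕ, j ≤ q - 1 ∧ q * i + 3 * j ≤ m ∧
        v = fun k => (pt k).1 ^ i * (pt k).2 ^ j})
    (m : ℕ) (hm : m ≤ 3 * q ^ 2 - 4) :
    {v : Fin n → F | ∀ c ∈ C m, ∑ k, v k * c k = 0}
      = (C (3 * q ^ 2 - 4 - m) : Set (Fin n → F)) := by
  classical
  have hq2 : 2 ≤ q := by
    rw [hq]
    calc 2 = 2 ^ 1 := rfl
    _ ≤ 2 ^ (2*t+1) := Nat.pow_le_pow_right (by norm_num) (by omega)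
  have hqsq : 4 ≤ q^2 := by nlinarith
  have hqq4 : 4 ≤ q * q := Nat.mul_le_mul hq2 hq2
  haveI hchar : CharP F 2 := aux_char_two (2*t+1) hq hF
  haveI : Fact (Nat.Prime 2) := ⟨Nat.prime_two⟩
  have h2F : (2 : F) = 0 := by exact_mod_cast (CharP.cast_eq_zero F 2)
  have hfrobx : ∀ x y : F, (x + y) ^ q = x ^ q + y ^ q := by
    intro x y
    rw [hq]
    exact add_pow_char_pow x y 2 (2*t+1)
  have hpow_card : ∀ x : F, x ^ (q * q) = x := by
    intro x
    have h := FiniteField.pow_card x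
    rwa [hF, pow_two] at h
  set m' : ℕ := 3*q^2 - 4 - m with hm'def
  have hmm' : m + m' = 3*q^2 - 4 := by omega
  have hmaster := aux_master t q hq F hF n hn pt hinj hrange
  have hgen : ∀ (M : ℕ) (i j : ℕ), j ≤ q - 1 → q*i + 3*j ≤ M →
      (fun k : Fin n => (pt k).1 ^ i * (pt k).2 ^ j) ∈ C M := by
    intro M i j hj hij
    rw [hC M]
    exact Submodule.subset_span ⟨i, j, hj, hij, rfl⟩
  have hpair : ∀ i j i' j' : ℕ, j ≤ q-1 → j' ≤ q-1 →
      ∑ k : Fin n, ((pt k).1 ^ i * (pt k).2 ^ j) * ((pt k).1 ^ i' * (pt k).2 ^ j')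
        = if (j+j' = q-1 ∨ j+j' = 2*q-2) ∧ ((i+i' ≠ 0) ∧ (3*q-3) ∣ (i+i')) then 1 else 0 := by
    intro i j i' j' hj hj'
    have h1 : ∀ k : Fin n, ((pt k).1 ^ i * (pt k).2 ^ j) * ((pt k).1 ^ i' * (pt k).2 ^ j')
        = (pt k).1 ^ (i+i') * (pt k).2 ^ (j+j') := by
      intro k; rw [pow_add, pow_add]; ring
    rw [Finset.sum_congr rfl (fun k _ => h1 k)]
    exact hmaster (i+i') (j+j') (by omega)
  have horth : ∀ i j i' j' : ℕ, j ≤ q-1 → j' ≤ q-1 → q*i+3*j ≤ m → q*i'+3*j' ≤ m' →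
      ∑ k : Fin n, ((pt k).1 ^ i * (pt k).2 ^ j) * ((pt k).1 ^ i' * (pt k).2 ^ j') = 0 := by
    intro i j i' j' hj hj' hd hd'
    rw [hpair i j i' j' hj hj', if_neg]
    rintro ⟨hc1, hc2, hc3⟩
    have hs : 3*q-3 ≤ i + i' := Nat.le_of_dvd (by omega) hc3
    have hj2 : q-1 ≤ j+j' := by rcases hc1 with h|h <;> omega
    have z1 : (q:ℤ)*i + 3*j ≤ (m:ℤ) := by exact_mod_cast hd
    have z2 : (q:ℤ)*i' + 3*j' ≤ (m':ℤ) := by exact_mod_cast hd'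
    have z3 : 3*(q:ℤ)-3 ≤ (i:ℤ) + i' := by
      have := hs; zify [show (3:ℕ) ≤ 3*q by omega] at this; push_cast at this ⊢; linarith
    have z4 : (q:ℤ)-1 ≤ (j:ℤ)+j' := by
      have := hj2; zify [show (1:ℕ) ≤ q by omega] at this; push_cast at this ⊢; linarith
    have z5 : (m:ℤ) + m' = 3*(q:ℤ)^2-4 := by
      have := hmm'; zify [show (4:ℕ) ≤ 3*q^2 by omega] at this; push_cast at this ⊢; linarith
    have z6 : 2 ≤ (q:ℤ) := by exact_mod_cast hq2
    nlinarith [mul_le_mul_of_nonneg_left z3 (by linarith : (0:ℤ) ≤ (q:ℤ))]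
  ext v
  simp only [Set.mem_setOf_eq, SetLike.mem_coe]
  constructor
  · intro hv
    have hcurve : ∀ k : Fin n, (pt k).2 ^ q + (pt k).2 = (pt k).1 ^ 3 :=
      fun k => (hrange (pt k)).mp ⟨k, rfl⟩
    have hbq : ∀ k : Fin n, (pt k).2 ^ q = (pt k).1 ^ 3 + (pt k).2 := by
      intro k
      linear_combination (hcurve k) - (pt k).2 * h2F
    have ha3 : ∀ k : Fin n, (pt k).1 ^ (3*q) = (pt k).1 ^ 3 := by
      intro k
      have h1 : ((pt k).1 ^ 3) ^ q = (pt k).1 ^ 3 := by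
        rw [← hcurve k, hfrobx]
        have h2 : ((pt k).2 ^ q) ^ q = (pt k).2 := by rw [← pow_mul]; exact hpow_card _
        rw [h2]
        ring
      rw [← pow_mul] at h1
      exact h1
    have hared : ∀ (k : Fin n) (i₀ : ℕ), (pt k).1 ^ (3*q-2+i₀) = (pt k).1 ^ (i₀+1) := by
      intro k i₀
      by_cases ha : (pt k).1 = 0
      · rw [ha, zero_pow (by omega), zero_pow (by omega)]
      · have hμ : (pt k).1 ^ (3*q-3) = 1 := by
          have h1 : (pt k).1 ^ (3*q-3) * (pt k).1 ^ 3 = (pt k).1 ^ (3*q) := by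
            rw [← pow_add]; congr 1; omega
          rw [ha3 k] at h1
          have h2 : (pt k).1 ^ (3*q-3) * (pt k).1 ^ 3 = 1 * (pt k).1 ^ 3 := by
            rw [h1, one_mul]
          exact mul_right_cancel₀ (pow_ne_zero _ ha) h2
        have h3 : 3*q-2+i₀ = (3*q-3) + (i₀+1) := by omega
        rw [h3, pow_add, hμ, one_mul]
    have hbred : ∀ (k : Fin n) (j₀ : ℕ), (pt k).2 ^ (q+j₀)
        = (pt k).1 ^ 3 * (pt k).2 ^ j₀ + (pt k).2 ^ (j₀+1) := by
      intro k j₀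
      rw [pow_add, hbq k]
      ring
    set E : (Fin (3*q-2) × Fin q) → (Fin n → F) :=
      fun p k => (pt k).1 ^ (p.1 : ℕ) * (pt k).2 ^ (p.2 : ℕ) with hEdef
    have hspanE : ∀ (i j : ℕ), (fun k : Fin n => (pt k).1 ^ i * (pt k).2 ^ j)
        ∈ Submodule.span F (Set.range E) := by
      have hstep1 : ∀ (j : ℕ), j < q → ∀ (i : ℕ),
          (fun k : Fin n => (pt k).1 ^ i * (pt k).2 ^ j) ∈ Submodule.span F (Set.range E) := by
        intro j hj i
        induction i using Nat.strong_induction_on with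
        | _ i ih =>
          by_cases hi : i < 3*q-2
          · exact Submodule.subset_span ⟨(⟨i, hi⟩, ⟨j, hj⟩), rfl⟩
          · have heq : (fun k : Fin n => (pt k).1 ^ i * (pt k).2 ^ j)
                = (fun k : Fin n => (pt k).1 ^ (i - (3*q-3)) * (pt k).2 ^ j) := by
              funext k
              have h2 : i - (3*q-3) = (i - (3*q-2)) + 1 := by omega
              rw [h2]
              conv_lhs => rw [show i = 3*q-2 + (i - (3*q-2)) from by omega,
                hared k (i - (3*q-2))]
            rw [heq]
            exact ih _ (by omega)
      have hstep2 : ∀ (j : ℕ), ∀ (i : ℕ),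
          (fun k : Fin n => (pt k).1 ^ i * (pt k).2 ^ j) ∈ Submodule.span F (Set.range E) := by
        intro j
        induction j using Nat.strong_induction_on with
        | _ j ihj =>
          intro i
          by_cases hjq : j < q
          · exact hstep1 j hjq i
          · have heq : (fun k : Fin n => (pt k).1 ^ i * (pt k).2 ^ j)
                = (fun k : Fin n => (pt k).1 ^ (i+3) * (pt k).2 ^ (j-q))
                  + (fun k : Fin n => (pt k).1 ^ i * (pt k).2 ^ (j-q+1)) := by
              funext k
              conv_lhs => rw [show j = q + (j - q) from by omega, hbred k (j-q)]
              simp only [Pi.add_apply]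
              rw [pow_add]
              ring
            rw [heq]
            exact Submodule.add_mem _ (ihj (j-q) (by omega) (i+3)) (ihj (j-q+1) (by omega) i)
      exact fun i j => hstep2 j i
    have hpoly : ∀ (P Q : Polynomial F),
        (fun k : Fin n => P.eval (pt k).1 * Q.eval (pt k).2) ∈ Submodule.span F (Set.range E) := by
      intro P Q
      have heq : (fun k : Fin n => P.eval (pt k).1 * Q.eval (pt k).2)
          = ∑ i ∈ Finset.range (P.natDegree + 1), ∑ j ∈ Finset.range (Q.natDegree + 1),
              (P.coeff i * Q.coeff j) • (fun k : Fin n => (pt k).1 ^ i * (pt k).2 ^ j) := by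
        funext k
        simp only [Finset.sum_apply, Pi.smul_apply, smul_eq_mul]
        rw [Polynomial.eval_eq_sum_range, Polynomial.eval_eq_sum_range, Finset.sum_mul_sum]
        refine Finset.sum_congr rfl (fun i _ => Finset.sum_congr rfl (fun j _ => by ring))
      rw [heq]
      exact Submodule.sum_mem _ (fun i _ => Submodule.sum_mem _ (fun j _ =>
        Submodule.smul_mem _ _ (hspanE i j)))
    have hpow1 : ∀ x : F, x ≠ 0 → x ^ (q*q - 1) = 1 := by
      intro x hx
      have h1 : x ^ (q*q-1) * x = x ^ (q*q) := by rw [← pow_succ]; congr 1; omega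
      rw [hpow_card x] at h1
      exact mul_right_cancel₀ hx (by rw [h1, one_mul])
    have hdelta : ∀ k₀ : Fin n, (fun k => if k₀ = k then (1:F) else 0)
        ∈ Submodule.span F (Set.range E) := by
      intro k₀
      set P : Polynomial F := 1 + (Polynomial.X + Polynomial.C (pt k₀).1) ^ (q*q-1) with hP
      set Q : Polynomial F := 1 + (Polynomial.X + Polynomial.C (pt k₀).2) ^ (q*q-1) with hQ
      have hPeval : ∀ x : F, P.eval x = if x = (pt k₀).1 then 1 else 0 := by
        intro x
        rw [hP]
        simp only [Polynomial.eval_add, Polynomial.eval_one, Polynomial.eval_pow,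
          Polynomial.eval_X, Polynomial.eval_C]
        split_ifs with h
        · have h2 : x + (pt k₀).1 = 0 := by rw [h]; linear_combination (pt k₀).1 * h2F
          rw [h2, zero_pow (by omega), add_zero]
        · have hne : x + (pt k₀).1 ≠ 0 := by
            intro hz
            exact h (by linear_combination hz - (pt k₀).1 * h2F)
          rw [hpow1 _ hne]
          linear_combination h2F
      have hQeval : ∀ x : F, Q.eval x = if x = (pt k₀).2 then 1 else 0 := by
        intro x
        rw [hQ]
        simp only [Polynomial.eval_add, Polynomial.eval_one, Polynomial.eval_pow,
          Polynomial.eval_X, Polynomial.eval_C]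
        split_ifs with h
        · have h2 : x + (pt k₀).2 = 0 := by rw [h]; linear_combination (pt k₀).2 * h2F
          rw [h2, zero_pow (by omega), add_zero]
        · have hne : x + (pt k₀).2 ≠ 0 := by
            intro hz
            exact h (by linear_combination hz - (pt k₀).2 * h2F)
          rw [hpow1 _ hne]
          linear_combination h2F
      have hEq : (fun k => if k₀ = k then (1:F) else 0)
          = fun k => P.eval (pt k).1 * Q.eval (pt k).2 := by
        funext k
        rw [hPeval, hQeval]
        by_cases hk : k₀ = k
        · subst hk; rw [if_pos rfl, if_pos rfl, if_pos rfl]; ring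
        · have hne : pt k ≠ pt k₀ := fun h => hk (hinj h).symm
          have hne2 : ¬((pt k).1 = (pt k₀).1 ∧ (pt k).2 = (pt k₀).2) := by
            rintro ⟨h1, h2⟩
            exact hne (Prod.ext h1 h2)
          rw [if_neg hk]
          by_cases h1 : (pt k).1 = (pt k₀).1
          · rw [if_pos h1, if_neg (fun h2 => hne2 ⟨h1, h2⟩), mul_zero]
          · rw [if_neg h1, zero_mul]
      rw [hEq]
      exact hpoly P Q
    have hvspan : v ∈ Submodule.span F (Set.range E) := by
      rw [pi_eq_sum_univ v]
      exact Submodule.sum_mem _ (fun k _ => Submodule.smul_mem _ _ (hdelta k))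
    obtain ⟨c, hcrep⟩ := (Submodule.mem_span_range_iff_exists_fun F).mp hvspan
    set cc : ℕ → ℕ → F := fun a b =>
      if h : a < 3*q-2 ∧ b < q then c (⟨a, h.1⟩, ⟨b, h.2⟩) else 0 with hccdef
    have hcc : ∀ (p : Fin (3*q-2) × Fin q), cc (p.1:ℕ) (p.2:ℕ) = c p := by
      rintro ⟨⟨a, ha⟩, ⟨b, hb⟩⟩
      rw [hccdef]
      exact dif_pos ⟨ha, hb⟩
    have hkey : ∀ (u j : ℕ), u ≤ 3*q-3 → j ≤ q-1 → q*u + 3*j ≤ m →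
        (cc (3*q-3-u) (q-1-j) + (if j = q-1 then cc (3*q-3-u) (q-1) else 0))
        + (if u = 3*q-3 then
            (cc (3*q-3) (q-1-j) + (if j = q-1 then cc (3*q-3) (q-1) else 0)) else 0) = 0 := by
      intro u j hu hj hqm
      have h0 : ∑ k, v k * ((pt k).1 ^ u * (pt k).2 ^ j) = 0 := hv _ (hgen m u j hj hqm)
      rw [← hcrep] at h0
      have h1 : ∑ k : Fin n, (∑ p : Fin (3*q-2) × Fin q, c p • E p) k
            * ((pt k).1 ^ u * (pt k).2 ^ j)
          = ∑ p : Fin (3*q-2) × Fin q, c p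
            * ∑ k : Fin n, ((pt k).1 ^ (p.1:ℕ) * (pt k).2 ^ (p.2:ℕ))
              * ((pt k).1 ^ u * (pt k).2 ^ j) := by
        simp only [Finset.sum_apply, Pi.smul_apply, smul_eq_mul, hEdef, Finset.sum_mul]
        rw [Finset.sum_comm]
        refine Finset.sum_congr rfl (fun p _ => ?_)
        rw [Finset.mul_sum]
        exact Finset.sum_congr rfl (fun k _ => by ring)
      rw [h1] at h0
      have h2 : ∀ p : Fin (3*q-2) × Fin q,
          ∑ k : Fin n, ((pt k).1 ^ (p.1:ℕ) * (pt k).2 ^ (p.2:ℕ))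
            * ((pt k).1 ^ u * (pt k).2 ^ j)
          = (if ((p.1:ℕ)+u = 3*q-3 ∨ (p.1:ℕ)+u = 6*q-6) then (1:F) else 0)
            * (if ((p.2:ℕ)+j = q-1 ∨ (p.2:ℕ)+j = 2*q-2) then (1:F) else 0) := by
        intro p
        have hb1 : (p.1:ℕ) ≤ 3*q-3 := by have := p.1.isLt; omega
        have hb2 : (p.2:ℕ) ≤ q-1 := by have := p.2.isLt; omega
        rw [hpair (p.1:ℕ) (p.2:ℕ) u j hb2 hj]
        have hiff : (((p.2:ℕ)+j = q-1 ∨ (p.2:ℕ)+j = 2*q-2)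
              ∧ (((p.1:ℕ)+u ≠ 0) ∧ (3*q-3) ∣ ((p.1:ℕ)+u)))
            ↔ ((((p.1:ℕ)+u = 3*q-3 ∨ (p.1:ℕ)+u = 6*q-6))
              ∧ ((p.2:ℕ)+j = q-1 ∨ (p.2:ℕ)+j = 2*q-2)) := by
          constructor
          · rintro ⟨hjc, hs0, k, hk⟩
            have hk1 : k ≠ 0 := by rintro rfl; omega
            have hk2 : k < 3 := by
              by_contra hk3
              have : (3*q-3) * 3 ≤ (3*q-3) * k := Nat.mul_le_mul_left _ (by omega)
              omega
            have hk12 : k = 1 ∨ k = 2 := by omega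
            rcases hk12 with rfl | rfl
            · exact ⟨Or.inl (by omega), hjc⟩
            · exact ⟨Or.inr (by omega), hjc⟩
          · rintro ⟨hs9, hj9⟩
            refine ⟨hj9, by omega, ?_⟩
            rcases hs9 with h|h
            · exact ⟨1, by omega⟩
            · exact ⟨2, by omega⟩
        rw [if_congr hiff rfl rfl]
        by_cases hA : ((p.1:ℕ)+u = 3*q-3 ∨ (p.1:ℕ)+u = 6*q-6)
        · by_cases hB : ((p.2:ℕ)+j = q-1 ∨ (p.2:ℕ)+j = 2*q-2)
          · rw [if_pos ⟨hA, hB⟩, if_pos hA, if_pos hB, one_mul]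
          · rw [if_neg (fun hc9 => hB hc9.2), if_pos hA, if_neg hB, mul_zero]
        · rw [if_neg (fun hc9 => hA hc9.1), if_neg hA, zero_mul]
      simp only [h2] at h0
      rw [Fintype.sum_prod_type] at h0
      have h3 : ∀ u' : Fin (3*q-2),
          ∑ j' : Fin q, c (u', j')
            * ((if ((u':ℕ)+u = 3*q-3 ∨ (u':ℕ)+u = 6*q-6) then (1:F) else 0)
              * (if ((j':ℕ)+j = q-1 ∨ (j':ℕ)+j = 2*q-2) then (1:F) else 0))
          = (if ((u':ℕ)+u = 3*q-3 ∨ (u':ℕ)+u = 6*q-6) then (1:F) else 0)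
            * (cc (u':ℕ) (q-1-j) + (if j = q-1 then cc (u':ℕ) (q-1) else 0)) := by
        intro u'
        have hccu : ∀ (b : ℕ) (hb : b < q), cc (u':ℕ) b = c (u', ⟨b, hb⟩) := by
          intro b hb
          rw [hccdef]
          exact dif_pos ⟨u'.isLt, hb⟩
        have hJ : ∑ j' : Fin q, c (u', j')
              * (if ((j':ℕ)+j = q-1 ∨ (j':ℕ)+j = 2*q-2) then (1:F) else 0)
            = cc (u':ℕ) (q-1-j) + (if j = q-1 then cc (u':ℕ) (q-1) else 0) := by
          by_cases hje : j = q-1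
          · have hsplit2 : ∀ j' : Fin q,
                c (u', j') * (if ((j':ℕ)+j = q-1 ∨ (j':ℕ)+j = 2*q-2) then (1:F) else 0)
                = (if j' = (⟨q-1-j, by omega⟩ : Fin q) then c (u', j') else 0)
                  + (if j' = (⟨q-1, by omega⟩ : Fin q) then c (u', j') else 0) := by
              intro j'
              have hlt := j'.isLt
              by_cases e1 : (j':ℕ) = q-1-j
              · rw [if_pos (Or.inl (by omega)), if_pos (Fin.ext_iff.mpr e1),
                  if_neg (fun hh => by have hx : (j':ℕ) = q-1 := Fin.ext_iff.mp hh; omega), add_zero, mul_one]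
              · by_cases e2 : (j':ℕ) = q-1
                · rw [if_pos (Or.inr (by omega)),
                    if_neg (fun hh => by have hx : (j':ℕ) = q-1-j := Fin.ext_iff.mp hh; omega),
                    if_pos (Fin.ext_iff.mpr e2), zero_add, mul_one]
                · rw [if_neg (by rintro (hh|hh) <;> omega),
                    if_neg (fun hh => e1 (Fin.ext_iff.mp hh)),
                    if_neg (fun hh => e2 (Fin.ext_iff.mp hh)), mul_zero, add_zero]
            rw [Finset.sum_congr rfl (fun j' _ => hsplit2 j'), Finset.sum_add_distrib,
              Finset.sum_ite_eq' univ _ _, Finset.sum_ite_eq' univ _ _,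
              if_pos (mem_univ _), if_pos (mem_univ _), if_pos hje]
            rw [hccu (q-1-j) (by omega), hccu (q-1) (by omega)]
          · have hsplit2 : ∀ j' : Fin q,
                c (u', j') * (if ((j':ℕ)+j = q-1 ∨ (j':ℕ)+j = 2*q-2) then (1:F) else 0)
                = (if j' = (⟨q-1-j, by omega⟩ : Fin q) then c (u', j') else 0) := by
              intro j'
              have hlt := j'.isLt
              by_cases e1 : (j':ℕ) = q-1-j
              · rw [if_pos (Or.inl (by omega)), if_pos (Fin.ext_iff.mpr e1), mul_one]
              · rw [if_neg (by rintro (hh|hh) <;> omega),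
                  if_neg (fun hh => e1 (Fin.ext_iff.mp hh)), mul_zero]
            rw [Finset.sum_congr rfl (fun j' _ => hsplit2 j'),
              Finset.sum_ite_eq' univ _ _, if_pos (mem_univ _), if_neg hje, add_zero]
            rw [hccu (q-1-j) (by omega)]
        rw [← hJ, Finset.mul_sum]
        exact Finset.sum_congr rfl (fun j' _ => by ring)
      rw [Finset.sum_congr rfl (fun u' _ => h3 u')] at h0
      by_cases hue : u = 3*q-3
      · have hsplit1 : ∀ u' : Fin (3*q-2),
            (if ((u':ℕ)+u = 3*q-3 ∨ (u':ℕ)+u = 6*q-6) then (1:F) else 0)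
              * (cc (u':ℕ) (q-1-j) + (if j = q-1 then cc (u':ℕ) (q-1) else 0))
            = (if u' = (⟨3*q-3-u, by omega⟩ : Fin (3*q-2)) then
                 (cc (u':ℕ) (q-1-j) + (if j = q-1 then cc (u':ℕ) (q-1) else 0)) else 0)
              + (if u' = (⟨3*q-3, by omega⟩ : Fin (3*q-2)) then
                 (cc (u':ℕ) (q-1-j) + (if j = q-1 then cc (u':ℕ) (q-1) else 0)) else 0) := by
          intro u'
          have hlt := u'.isLt
          by_cases e1 : (u':ℕ) = 3*q-3-u
          · rw [if_pos (Or.inl (by omega)), if_pos (Fin.ext_iff.mpr e1),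
              if_neg (fun hh : u' = (⟨3*q-3, by omega⟩ : Fin (3*q-2)) => by
                have hx : (u':ℕ) = 3*q-3 := Fin.ext_iff.mp hh
                omega), one_mul, add_zero]
          · by_cases e2 : (u':ℕ) = 3*q-3
            · rw [if_pos (Or.inr (by omega)),
                if_neg (fun hh : u' = (⟨3*q-3-u, by omega⟩ : Fin (3*q-2)) => by
                  have hx : (u':ℕ) = 3*q-3-u := Fin.ext_iff.mp hh
                  exact e1 hx),
                if_pos (Fin.ext_iff.mpr e2), one_mul, zero_add]
            · rw [if_neg (by rintro (hh|hh) <;> omega),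
                if_neg (fun hh : u' = (⟨3*q-3-u, by omega⟩ : Fin (3*q-2)) => by
                  have hx : (u':ℕ) = 3*q-3-u := Fin.ext_iff.mp hh
                  exact e1 hx),
                if_neg (fun hh : u' = (⟨3*q-3, by omega⟩ : Fin (3*q-2)) => by
                  have hx : (u':ℕ) = 3*q-3 := Fin.ext_iff.mp hh
                  exact e2 hx), zero_mul, add_zero]
        rw [Finset.sum_congr rfl (fun u' _ => hsplit1 u'), Finset.sum_add_distrib,
          Finset.sum_ite_eq' univ _ _, Finset.sum_ite_eq' univ _ _,
          if_pos (mem_univ _), if_pos (mem_univ _)] at h0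
        rw [if_pos hue]
        exact h0
      · have hsplit1 : ∀ u' : Fin (3*q-2),
            (if ((u':ℕ)+u = 3*q-3 ∨ (u':ℕ)+u = 6*q-6) then (1:F) else 0)
              * (cc (u':ℕ) (q-1-j) + (if j = q-1 then cc (u':ℕ) (q-1) else 0))
            = (if u' = (⟨3*q-3-u, by omega⟩ : Fin (3*q-2)) then
                 (cc (u':ℕ) (q-1-j) + (if j = q-1 then cc (u':ℕ) (q-1) else 0)) else 0) := by
          intro u'
          have hlt := u'.isLt
          by_cases e1 : (u':ℕ) = 3*q-3-u
          · rw [if_pos (Or.inl (by omega)), if_pos (Fin.ext_iff.mpr e1), one_mul]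
          · rw [if_neg (by rintro (hh|hh) <;> omega),
              if_neg (fun hh => e1 (Fin.ext_iff.mp hh)), zero_mul]
        rw [Finset.sum_congr rfl (fun u' _ => hsplit1 u'),
          Finset.sum_ite_eq' univ _ _, if_pos (mem_univ _)] at h0
        rw [if_neg hue, add_zero]
        exact h0
    have hS1 : ∀ (u j : ℕ), u < 3*q-3 → j < q-1 → q*u+3*j ≤ m →
        cc (3*q-3-u) (q-1-j) = 0 := by
      intro u j hu hj hqm
      have hk := hkey u j (by omega) (by omega) hqm
      rw [if_neg (by omega), if_neg (by omega), add_zero, add_zero] at hk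
      exact hk
    have hS2 : ∀ (u : ℕ), u < 3*q-3 → q*u+3*(q-1) ≤ m → cc (3*q-3-u) 0 = 0 := by
      intro u hu hqm
      have hk := hkey u (q-1) (by omega) (le_refl _) hqm
      rw [if_neg (show ¬(u = 3*q-3) from by omega), add_zero, if_pos rfl,
        show q-1-(q-1) = 0 from by omega] at hk
      have h2 := hS1 u 0 hu (by omega) (by omega)
      rw [show q-1-0 = q-1 from by omega] at h2
      rw [h2, add_zero] at hk
      exact hk
    have hS3 : ∀ (j : ℕ), j < q-1 → q*(3*q-3)+3*j ≤ m → cc 0 (q-1-j) = 0 := by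
      intro j hj hqm
      have hk := hkey (3*q-3) j (le_refl _) (by omega) hqm
      have hjne : ¬(j = q-1) := by omega
      rw [if_neg hjne, if_pos (rfl : (3*q-3:ℕ) = 3*q-3), if_neg hjne, add_zero, add_zero,
        show 3*q-3-(3*q-3) = 0 from by omega] at hk
      have h2 := hS1 0 j (by omega) hj (by omega)
      rw [show 3*q-3-0 = 3*q-3 from by omega] at h2
      rw [h2, add_zero] at hk
      exact hk
    have hclaim : ∀ (u j : ℕ), u ≤ 3*q-3 → j ≤ q-1 → q*u+3*j ≤ m →
        cc (3*q-3-u) (q-1-j) = 0 := by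
      intro u j hu hj hqm
      by_cases hue : u = 3*q-3
      · by_cases hje : j = q-1
        · have hk := hkey u j hu hj hqm
          rw [if_pos hje, if_pos hue, if_pos hje] at hk
          have e1 : 3*q-3-u = 0 := by omega
          have e2 : q-1-j = 0 := by omega
          rw [e1, e2] at hk ⊢
          have t1 : cc 0 (q-1) = 0 := by
            have h2 := hS3 0 (by omega) (by rw [hue, hje] at hqm; omega)
            rw [show q-1-0 = q-1 from by omega] at h2
            exact h2
          have t2 : cc (3*q-3) 0 = 0 := by
            have h2 := hS2 0 (by omega) (by rw [hue, hje] at hqm; omega)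
            rw [show 3*q-3-0 = 3*q-3 from by omega] at h2
            exact h2
          have t3 : cc (3*q-3) (q-1) = 0 := by
            have h2 := hS1 0 0 (by omega) (by omega) (by omega)
            rw [show 3*q-3-0 = 3*q-3 from by omega, show q-1-0 = q-1 from by omega] at h2
            exact h2
          rw [t1, t2, t3] at hk
          linear_combination hk
        · rw [show 3*q-3-u = 0 from by omega]
          exact hS3 j (by omega) (by rw [hue] at hqm; exact hqm)
      · by_cases hje : j = q-1
        · rw [show q-1-j = 0 from by omega]
          exact hS2 u (by omega) (by rw [hje] at hqm; exact hqm)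
        · exact hS1 u j (by omega) (by omega) hqm
    rw [← hcrep]
    refine Submodule.sum_mem _ (fun p _ => ?_)
    by_cases hcp : c p = 0
    · rw [hcp, zero_smul]
      exact Submodule.zero_mem _
    · have hp1 : (p.1:ℕ) ≤ 3*q-3 := by have := p.1.isLt; omega
      have hp2 : (p.2:ℕ) ≤ q-1 := by have := p.2.isLt; omega
      have hble : q*(p.1:ℕ) + 3*(p.2:ℕ) ≤ m' := by
        by_contra hgt
        apply hcp
        have hb : q*(3*q-3-(p.1:ℕ)) + 3*(q-1-(p.2:ℕ)) ≤ m := by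
          have hgt' : m' + 1 ≤ q*(p.1:ℕ)+3*(p.2:ℕ) := by omega
          have hz1 : (m':ℤ) + 1 ≤ (q:ℤ)*((p.1:ℕ):ℤ) + 3*((p.2:ℕ):ℤ) := by exact_mod_cast hgt'
          have hz5 : (m:ℤ) + (m':ℤ) = 3*(q:ℤ)^2-4 := by
            have h9 := hmm'
            zify [show 4 ≤ 3*q^2 from by omega] at h9
            linarith
          have hz6 : 2 ≤ (q:ℤ) := by exact_mod_cast hq2
          zify [hp1, hp2, show 3 ≤ 3*q from by omega, show 1 ≤ q from by omega]
          nlinarith [hz1, hz5, hz6]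
        have h2 := hclaim (3*q-3-(p.1:ℕ)) (q-1-(p.2:ℕ)) (by omega) (by omega) hb
        rw [show 3*q-3-(3*q-3-(p.1:ℕ)) = (p.1:ℕ) from by omega,
          show q-1-(q-1-(p.2:ℕ)) = (p.2:ℕ) from by omega] at h2
        rw [← hcc p]
        exact h2
      have hE : E p ∈ C m' := hgen m' (p.1:ℕ) (p.2:ℕ) hp2 hble
      exact Submodule.smul_mem _ _ hE
  · intro hv c hc
    rw [hC m'] at hv
    induction hv using Submodule.span_induction with
    | mem w hw =>
      obtain ⟨i', j', hj', hd', rfl⟩ := hw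
      rw [hC m] at hc
      induction hc using Submodule.span_induction with
      | mem x hx =>
        obtain ⟨i, j, hj, hd, rfl⟩ := hx
        have h1 : ∀ k : Fin n, ((pt k).1 ^ i' * (pt k).2 ^ j') * ((pt k).1 ^ i * (pt k).2 ^ j)
            = ((pt k).1 ^ i * (pt k).2 ^ j) * ((pt k).1 ^ i' * (pt k).2 ^ j') := fun k => mul_comm _ _
        rw [Finset.sum_congr rfl (fun k _ => h1 k)]
        exact horth i j i' j' hj hj' hd hd'
      | zero => simp
      | add x y hx hy ihx ihy =>
        simp only [Pi.add_apply, mul_add, Finset.sum_add_distrib, ihx, ihy, add_zero]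
      | smul a x hx ihx =>
        simp only [Pi.smul_apply, smul_eq_mul, mul_left_comm, ← Finset.mul_sum, ihx, mul_zero]
    | zero => simp
    | add x y hx hy ihx ihy =>
      simp only [Pi.add_apply, add_mul, Finset.sum_add_distrib, ihx, ihy, add_zero]
    | smul a x hx ihx =>
      simp only [Pi.smul_apply, smul_eq_mul, mul_assoc, ← Finset.mul_sum, ihx, mul_zero]
end

section
/- Let q = 2^{2t+1} be an odd power of 2, F = 𝔽_{q²}, n = 3q² − 2q, and let (a₁,b₁),…,(a_n,b_n) be an enumeration of all pairs in F × F with (b_k)^q + b_k = (a_k)³. For a nonnegative integer m let C_m ⊆ F^n be the F-linear span of the vectors ((a_k)^i (b_k)^j)_{k=1,…,n} over all pairs (i,j) of nonnegative integers with j ≤ q − 1 and qi + 3j ≤ m. If m ≤ 3q²/2 − 2, then C_m is Euclidean self-orthogonal: for all u, v ∈ C_m, Σ_{k=1}^n u_k v_k = 0. -/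
lemma char2_add_pow_two_pow {F : Type} [CommRing F] (h2 : (2:F) = 0) (k : ℕ) :
    ∀ x y : F, (x + y) ^ (2 ^ k) = x ^ (2 ^ k) + y ^ (2 ^ k) := by
  induction k with
  | zero => intro x y; simp
  | succ k ih =>
    intro x y
    rw [pow_succ, pow_mul, pow_mul, pow_mul, ih x y]
    linear_combination (x ^ (2 ^ k) * y ^ (2 ^ k)) * h2

lemma cube_root_unity_sum {F : Type} [Field F] (h2 : (2:F) = 0)
    (ζ : F) (hζ3 : ζ ^ 3 = 1) (hζ1 : ζ ≠ 1) : ζ ^ 2 + ζ + 1 = 0 := by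
  have hfac : (ζ + 1) * (ζ ^ 2 + ζ + 1) = 0 := by
    linear_combination hζ3 + (ζ ^ 2 + ζ + 1) * h2
  rcases mul_eq_zero.mp hfac with h | h
  · exact absurd (show ζ = (1:F) by linear_combination h - h2) hζ1
  · exact h

lemma cube_fiber_sum {F : Type} [Field F] [Fintype F] [DecidableEq F] (h2 : (2:F) = 0)
    (ω : F) (hω3 : ω ^ 3 = 1) (hω1 : ω ≠ 1) (c a0 : F) (ha0 : a0 ^ 3 = c) (I : ℕ) :
    ∑ a : F, (if a ^ 3 = c then a ^ I else 0) = if 3 ∣ I then c ^ (I / 3) else 0 := by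
  by_cases hc : c = 0
  · subst hc
    have hiff : ∀ a : F, (a ^ 3 = 0) ↔ a = 0 := fun a => pow_eq_zero_iff (by norm_num)
    have hstep : ∀ a : F, (if a ^ 3 = 0 then a ^ I else 0) = if a = 0 then (0:F) ^ I else 0 := by
      intro a
      by_cases h : a = 0
      · subst h; simp
      · rw [if_neg (fun hh => h ((hiff a).mp hh)), if_neg h]
    rw [Finset.sum_congr rfl (fun a _ => hstep a), Finset.sum_ite_eq' Finset.univ (0:F)]
    rw [if_pos (Finset.mem_univ _)]
    by_cases hI0 : I = 0
    · subst hI0; simp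
    · rw [zero_pow hI0]
      by_cases hI : 3 ∣ I
      · obtain ⟨k, rfl⟩ := hI
        rw [if_pos ⟨k, rfl⟩, Nat.mul_div_cancel_left k (by norm_num),
          zero_pow (by intro h; exact hI0 (by omega))]
      · rw [if_neg hI]
  · have ha0ne : a0 ≠ 0 := fun h => hc (by rw [← ha0, h]; simp)
    have hω0 : ω ≠ 0 := fun h => by simp [h] at hω3
    have hωsq : ω ^ 2 ≠ 1 := by
      intro h
      have := hω3
      rw [pow_succ, h, one_mul] at this
      exact hω1 this
    have hS : ω ^ 2 + ω + 1 = 0 := cube_root_unity_sum h2 ω hω3 hω1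
    have key : ∀ a : F, a ^ 3 = c ↔ (a = a0 ∨ a = ω * a0 ∨ a = ω ^ 2 * a0) := by
      intro a
      have hprod : (a - a0) * (a - ω * a0) * (a - ω ^ 2 * a0) = a ^ 3 - c := by
        linear_combination (a * a0 ^ 2 - a ^ 2 * a0) * hS + (a * a0 ^ 2 - a0 ^ 3) * hω3 - ha0
      constructor
      · intro h
        have h0 : (a - a0) * (a - ω * a0) * (a - ω ^ 2 * a0) = 0 := by
          rw [hprod, h, sub_self]
        rcases mul_eq_zero.mp h0 with h' | h'
        · rcases mul_eq_zero.mp h' with h'' | h''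
          · exact Or.inl (sub_eq_zero.mp h'')
          · exact Or.inr (Or.inl (sub_eq_zero.mp h''))
        · exact Or.inr (Or.inr (sub_eq_zero.mp h'))
      · intro h
        have hne : a ^ 3 - c = 0 := by
          rw [← hprod]; rcases h with rfl | rfl | rfl <;> simp
        exact sub_eq_zero.mp hne
    have d1 : a0 ≠ ω * a0 := by
      intro h
      exact hω1 (mul_right_cancel₀ ha0ne (by rw [one_mul, ← h])).symm
    have d2 : a0 ≠ ω ^ 2 * a0 := by
      intro h
      exact hωsq (mul_right_cancel₀ ha0ne (by rw [one_mul, ← h])).symm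
    have d3 : ω * a0 ≠ ω ^ 2 * a0 := by
      intro h
      have := mul_right_cancel₀ ha0ne h
      rw [pow_two] at this
      exact hω1 (mul_left_cancel₀ hω0 (by rw [← this, mul_one])).symm
    have hset : (Finset.univ.filter fun a : F => a ^ 3 = c) = {a0, ω * a0, ω ^ 2 * a0} := by
      ext a
      simp only [Finset.mem_filter, Finset.mem_univ, true_and, Finset.mem_insert,
        Finset.mem_singleton]
      exact key a
    rw [← Finset.sum_filter, hset]
    rw [Finset.sum_insert (by simp [d1, d2]), Finset.sum_insert (by simp [d3]),
      Finset.sum_singleton]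
    by_cases hI : 3 ∣ I
    · obtain ⟨i', rfl⟩ := hI
      rw [if_pos ⟨i', rfl⟩, Nat.mul_div_cancel_left i' (by norm_num)]
      have hωI : ω ^ (3 * i') = 1 := by rw [pow_mul, hω3, one_pow]
      have e1 : (ω * a0) ^ (3 * i') = a0 ^ (3 * i') := by rw [mul_pow, hωI, one_mul]
      have e2 : (ω ^ 2 * a0) ^ (3 * i') = a0 ^ (3 * i') := by
        rw [mul_pow, ← pow_mul, mul_comm 2 (3 * i'), pow_mul, hωI, one_pow, one_mul]
      rw [e1, e2]
      have e3 : a0 ^ (3 * i') = c ^ i' := by rw [pow_mul, ha0]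
      rw [e3]
      linear_combination (c ^ i') * h2
    · rw [if_neg hI]
      have hζ3 : (ω ^ I) ^ 3 = 1 := by rw [← pow_mul, mul_comm, pow_mul, hω3, one_pow]
      have hζ1 : ω ^ I ≠ 1 := by
        intro h
        have hr : I % 3 ≠ 0 := fun hh => hI (Nat.dvd_of_mod_eq_zero hh)
        have hdecomp : ω ^ I = ω ^ (I % 3) := by
          conv_lhs => rw [← Nat.div_add_mod I 3]
          rw [pow_add, pow_mul, hω3, one_pow, one_mul]
        have hr2 : I % 3 = 1 ∨ I % 3 = 2 := by omega
        rcases hr2 with h3 | h3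
        · rw [hdecomp, h3, pow_one] at h; exact hω1 h
        · rw [hdecomp, h3] at h; exact hωsq h
      have hζS : (ω ^ I) ^ 2 + ω ^ I + 1 = 0 := cube_root_unity_sum h2 _ hζ3 hζ1
      have e1 : (ω * a0) ^ I = ω ^ I * a0 ^ I := by rw [mul_pow]
      have e2 : (ω ^ 2 * a0) ^ I = (ω ^ I) ^ 2 * a0 ^ I := by
        rw [mul_pow, ← pow_mul, mul_comm 2 I, pow_mul]
      rw [e1, e2]
      linear_combination (a0 ^ I) * hζS

lemma curve_monomial_sum_zero
    (q : ℕ) (hq2 : 2 ≤ q)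
    (F : Type) [Field F] [Fintype F] [DecidableEq F] (hF : Fintype.card F = q ^ 2)
    (h2 : (2:F) = 0)
    (hfrob : ∀ x y : F, (x + y) ^ q = x ^ q + y ^ q)
    (ω : F) (hω3 : ω ^ 3 = 1) (hω1 : ω ≠ 1)
    (hcube : ∀ c : F, c ^ q = c → ∃ a0 : F, a0 ^ 3 = c)
    (n : ℕ) (pt : Fin n → F × F) (hinj : Function.Injective pt)
    (hrange : ∀ p : F × F, p ∈ Set.range pt ↔ p.2 ^ q + p.2 = p.1 ^ 3)
    (I J : ℕ) (hIJ : q * I + 3 * J ≤ 3 * q ^ 2 - 4) :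
    ∑ k, (pt k).1 ^ I * (pt k).2 ^ J = 0 := by
  have himg : Finset.univ.image pt
      = Finset.univ.filter (fun p : F × F => p.2 ^ q + p.2 = p.1 ^ 3) := by
    ext p
    simp only [Finset.mem_image, Finset.mem_filter, Finset.mem_univ, true_and]
    rw [← hrange p]
    simp [Set.mem_range]
  have hbq : ∀ b : F, (b ^ q + b) ^ q = b ^ q + b := by
    intro b
    rw [hfrob, ← pow_mul]
    have hb : b ^ (q * q) = b := by
      have := FiniteField.pow_card b
      rwa [hF, pow_two] at this
    rw [hb, add_comm]
  have hinner : ∀ b : F, ∑ a : F, (if a ^ 3 = b ^ q + b then a ^ I else 0)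
      = if 3 ∣ I then (b ^ q + b) ^ (I / 3) else 0 := by
    intro b
    obtain ⟨a0, ha0⟩ := hcube _ (hbq b)
    exact cube_fiber_sum h2 ω hω3 hω1 _ a0 ha0 I
  calc ∑ k, (pt k).1 ^ I * (pt k).2 ^ J
      = ∑ p ∈ Finset.univ.image pt, p.1 ^ I * p.2 ^ J :=
        (Finset.sum_image (f := fun p : F × F => p.1 ^ I * p.2 ^ J)
          (fun x _ y _ h => hinj h)).symm
    _ = ∑ p ∈ Finset.univ.filter (fun p : F × F => p.2 ^ q + p.2 = p.1 ^ 3),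
          p.1 ^ I * p.2 ^ J := by rw [himg]
    _ = ∑ p : F × F, if p.2 ^ q + p.2 = p.1 ^ 3 then p.1 ^ I * p.2 ^ J else 0 :=
        Finset.sum_filter _ _
    _ = ∑ b : F, ∑ a : F, (if a ^ 3 = b ^ q + b then a ^ I else 0) * b ^ J := by
        rw [Fintype.sum_prod_type, Finset.sum_comm]
        refine Finset.sum_congr rfl fun b _ => Finset.sum_congr rfl fun a _ => ?_
        by_cases h : b ^ q + b = a ^ 3
        · rw [if_pos h, if_pos h.symm]
        · rw [if_neg h, if_neg (fun hh => h hh.symm), zero_mul]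
    _ = ∑ b : F, (if 3 ∣ I then (b ^ q + b) ^ (I / 3) else 0) * b ^ J := by
        refine Finset.sum_congr rfl fun b _ => ?_
        rw [← Finset.sum_mul, hinner b]
    _ = 0 := by
        by_cases hI : 3 ∣ I
        · obtain ⟨i', rfl⟩ := hI
          have hdiv : 3 * i' / 3 = i' := Nat.mul_div_cancel_left i' (by norm_num)
          calc ∑ b : F, (if 3 ∣ 3 * i' then (b ^ q + b) ^ (3 * i' / 3) else 0) * b ^ J
              = ∑ b : F, ∑ s ∈ Finset.range (i' + 1),
                  (i'.choose s : F) * b ^ (q * s + (i' - s) + J) := by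
                refine Finset.sum_congr rfl fun b _ => ?_
                rw [if_pos ⟨i', rfl⟩, hdiv, add_pow, Finset.sum_mul]
                refine Finset.sum_congr rfl fun s hs => ?_
                rw [← pow_mul, pow_add, pow_add]
                ring
            _ = ∑ s ∈ Finset.range (i' + 1),
                  (i'.choose s : F) * ∑ b : F, b ^ (q * s + (i' - s) + J) := by
                rw [Finset.sum_comm]
                exact Finset.sum_congr rfl fun s _ => (Finset.mul_sum _ _ _).symm
            _ = 0 := by
                refine Finset.sum_eq_zero fun s hs => ?_
                have hsle : s ≤ i' := by
                  have := Finset.mem_range.mp hs; omega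
                obtain ⟨d, hd⟩ : ∃ d, i' = s + d := ⟨i' - s, by omega⟩
                have hds : i' - s = d := by omega
                have hIJ' : 3 * (q * s) + 3 * (q * d) + 3 * J ≤ 3 * q ^ 2 - 4 := by
                  calc 3 * (q * s) + 3 * (q * d) + 3 * J
                      = q * (3 * i') + 3 * J := by rw [hd]; ring
                    _ ≤ 3 * q ^ 2 - 4 := hIJ
                have hdq : d ≤ q * d := Nat.le_mul_of_pos_left d (by omega)
                have hq4 : 4 ≤ q ^ 2 := by nlinarith
                have hlt : q * s + (i' - s) + J < Fintype.card F - 1 := by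
                  rw [hF, hds]
                  generalize q ^ 2 = Q at hIJ' hq4 ⊢
                  generalize q * s = A at hIJ' ⊢
                  generalize q * d = B at hIJ' hdq ⊢
                  omega
                rw [FiniteField.sum_pow_lt_card_sub_one F _ hlt, mul_zero]
        · simp [if_neg hI]

theorem second_curve_euclidean_self_orthogonal (t : ℕ) (q : ℕ) (hq : q = 2 ^ (2 * t + 1))
    (F : Type) [Field F] [Fintype F] (hF : Fintype.card F = q ^ 2)
    (n : ℕ) (hn : n = 3 * q ^ 2 - 2 * q)
    (pt : Fin n → F × F) (hinj : Function.Injective pt)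
    (hrange : ∀ p : F × F, p ∈ Set.range pt ↔ p.2 ^ q + p.2 = p.1 ^ 3)
    (C : ℕ → Submodule F (Fin n → F))
    (hC : ∀ m : ℕ, C m = Submodule.span F
      {v : Fin n → F | ∃ i j : ℕ, j ≤ q - 1 ∧ q * i + 3 * j ≤ m ∧
        v = fun k => (pt k).1 ^ i * (pt k).2 ^ j})
    (m : ℕ) (hm : m ≤ 3 * q ^ 2 / 2 - 2) :
    ∀ u ∈ C m, ∀ v ∈ C m, ∑ k, u k * v k = 0 := by
  classical
  have hq2 : 2 ≤ q := by
    rw [hq]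
    calc 2 = 2 ^ 1 := by norm_num
      _ ≤ 2 ^ (2 * t + 1) := Nat.pow_le_pow_right (by norm_num) (by omega)
  -- characteristic 2
  have h2 : (2:F) = 0 := by
    have hc0 : ((Fintype.card F : ℕ) : F) = 0 := FiniteField.cast_card_eq_zero F
    rw [hF, hq] at hc0
    push_cast at hc0
    have h1 : ((2:F) ^ (2 * t + 1)) ^ 2 = 0 := by exact_mod_cast hc0
    have h2' : (2:F) ^ (2 * t + 1) = 0 := by
      exact pow_eq_zero_iff (by norm_num) |>.mp h1
    exact pow_eq_zero_iff (by omega) |>.mp h2'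
  -- Frobenius
  have hfrob : ∀ x y : F, (x + y) ^ q = x ^ q + y ^ q := by
    intro x y
    rw [hq]
    exact char2_add_pow_two_pow h2 (2 * t + 1) x y
  -- arithmetic facts
  have hqA : q = 4 ^ t * 2 := by
    rw [hq, pow_succ, pow_mul]; norm_num
  have hA : 4 ^ t % 3 = 1 := by
    rw [Nat.pow_mod]; simp
  have hq3 : q % 3 = 2 := by omega
  have hsq3 : q ^ 2 % 3 = 1 := by
    rw [Nat.pow_mod, hq3]
  -- primitive cube root of unity
  haveI : Fact (Nat.Prime 3) := ⟨by norm_num⟩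
  have hunits : 3 ∣ Fintype.card Fˣ := by
    rw [Fintype.card_units, hF]
    generalize q ^ 2 = Q at hsq3 ⊢
    omega
  obtain ⟨g, hg⟩ := exists_prime_orderOf_dvd_card 3 hunits
  have hω3 : ((g : F)) ^ 3 = 1 := by
    have := pow_orderOf_eq_one g
    rw [hg] at this
    calc ((g : F)) ^ 3 = ((g ^ 3 : Fˣ) : F) := by rw [Units.val_pow_eq_pow_val]
      _ = ((1 : Fˣ) : F) := by rw [this]
      _ = 1 := Units.val_one
  have hω1 : (g : F) ≠ 1 := by
    intro h
    have hg1 : g = 1 := Units.ext (by simpa using h)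
    rw [hg1, orderOf_one] at hg
    norm_num at hg
  -- cube roots
  have hcube : ∀ c : F, c ^ q = c → ∃ a0 : F, a0 ^ 3 = c := by
    intro c hc
    by_cases h0 : c = 0
    · exact ⟨0, by rw [h0]; simp⟩
    · have h3u : 3 ∣ 2 * q - 1 := by omega
      obtain ⟨u, hu⟩ := h3u
      refine ⟨c ^ u, ?_⟩
      have hstep : c ^ (2 * q - 1) * c = c * c := by
        rw [← pow_succ]
        have h1 : 2 * q - 1 + 1 = q * 2 := by omega
        rw [h1, pow_mul, hc, pow_two]
      have hc2 : c ^ (2 * q - 1) = c := mul_right_cancel₀ h0 hstep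
      calc (c ^ u) ^ 3 = c ^ (u * 3) := (pow_mul c u 3).symm
        _ = c ^ (2 * q - 1) := by rw [mul_comm, ← hu]
        _ = c := hc2
  -- the key vanishing for products of two admissible monomials
  have hkey : ∀ x ∈ {v : Fin n → F | ∃ i j : ℕ, j ≤ q - 1 ∧ q * i + 3 * j ≤ m ∧
        v = fun k => (pt k).1 ^ i * (pt k).2 ^ j},
      ∀ y ∈ {v : Fin n → F | ∃ i j : ℕ, j ≤ q - 1 ∧ q * i + 3 * j ≤ m ∧
        v = fun k => (pt k).1 ^ i * (pt k).2 ^ j},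
      ∑ k, x k * y k = 0 := by
    rintro x ⟨i1, j1, -, hle1, rfl⟩ y ⟨i2, j2, -, hle2, rfl⟩
    have hstep : ∀ k : Fin n, ((pt k).1 ^ i1 * (pt k).2 ^ j1) * ((pt k).1 ^ i2 * (pt k).2 ^ j2)
        = (pt k).1 ^ (i1 + i2) * (pt k).2 ^ (j1 + j2) := by
      intro k
      rw [pow_add, pow_add]; ring
    rw [Finset.sum_congr rfl fun k _ => hstep k]
    refine curve_monomial_sum_zero q hq2 F hF h2 hfrob _ hω3 hω1 hcube n pt hinj hrange _ _ ?_
    -- bound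
    have hq2pow : q ^ 2 = 2 * 2 ^ (4 * t + 1) := by
      rw [hq, ← pow_mul]
      rw [show (2 * t + 1) * 2 = 4 * t + 1 + 1 from by ring, pow_succ]
      ring
    obtain ⟨r, hr⟩ : ∃ r, q ^ 2 = 2 * r := ⟨_, hq2pow⟩
    have hsum : q * (i1 + i2) + 3 * (j1 + j2)
        = (q * i1 + 3 * j1) + (q * i2 + 3 * j2) := by ring
    rw [hsum]
    have h2m : (q * i1 + 3 * j1) + (q * i2 + 3 * j2) ≤ m + m := add_le_add hle1 hle2
    rw [hr] at hm ⊢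
    generalize q * i1 + 3 * j1 = A at h2m
    generalize q * i2 + 3 * j2 = B at h2m
    omega
  -- span induction
  intro u hu v hv
  rw [hC m] at hu hv
  revert v
  refine Submodule.span_induction
    (p := fun x _ => ∀ v ∈ Submodule.span F {v : Fin n → F | ∃ i j : ℕ, j ≤ q - 1 ∧
      q * i + 3 * j ≤ m ∧ v = fun k => (pt k).1 ^ i * (pt k).2 ^ j},
      ∑ k, x k * v k = 0) ?_ ?_ ?_ ?_ hu
  · intro x hx v hv
    refine Submodule.span_induction (p := fun y _ => ∑ k, x k * y k = 0) ?_ ?_ ?_ ?_ hv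
    · intro y hy; exact hkey x hx y hy
    · simp
    · intro y z _ _ hy hz
      simp only [Pi.add_apply, mul_add, Finset.sum_add_distrib, hy, hz, add_zero]
    · intro a y _ hy
      simp only [Pi.smul_apply, smul_eq_mul, mul_left_comm]
      rw [← Finset.mul_sum, hy, mul_zero]
  · intro v _; simp
  · intro x y _ _ hx hy v hv
    simp only [Pi.add_apply, add_mul, Finset.sum_add_distrib, hx v hv, hy v hv, add_zero]
  · intro a x _ hx v hv
    simp only [Pi.smul_apply, smul_eq_mul, mul_assoc]
    rw [← Finset.mul_sum, hx v hv, mul_zero]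
end

section
/- Let q = 2^{2t+1} be an odd power of 2, F = 𝔽_{q²}, n = 3q² − 2q, and let (a₁,b₁),…,(a_n,b_n) be an enumeration of all pairs in F × F with (b_k)^q + b_k = (a_k)³. For a nonnegative integer m let C_m ⊆ F^n be the F-linear span of the vectors ((a_k)^i (b_k)^j)_{k=1,…,n} over all pairs (i,j) of nonnegative integers with j ≤ q − 1 and qi + 3j ≤ m. If m ≤ 3q − 4, then C_m is Hermitian self-orthogonal: for all u, v ∈ C_m, Σ_{k=1}^n u_k (v_k)^q = 0. -/
open Finset

private lemma char_two_of_card {F : Type} [Field F] [Fintype F] {s : ℕ}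
    (h : Fintype.card F = 2 ^ s) : CharP F 2 := by
  have hC : CharP F (ringChar F) := ringChar.charP F
  obtain ⟨n, hp, hcard⟩ := FiniteField.card F (ringChar F)
  have hdvd : ringChar F ∣ 2 ^ s := by
    rw [← h, hcard]; exact dvd_pow_self _ n.ne_zero
  have h2 : ringChar F = 2 :=
    (Nat.prime_dvd_prime_iff_eq hp Nat.prime_two).mp (hp.dvd_of_dvd_pow hdvd)
  rw [← h2]; exact hC

private lemma exists_cube_root_unity {F : Type} [Field F] [Fintype F]
    (h3 : 3 ∣ Fintype.card F - 1) (h1 : 3 < Fintype.card F) :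
    ∃ ζ : F, ζ ^ 3 = 1 ∧ ζ ≠ 1 := by
  letI : DecidableEq F := Classical.decEq F
  obtain ⟨g, hg⟩ := IsCyclic.exists_generator (α := Fˣ)
  have hord : orderOf g = Fintype.card Fˣ := by
    rw [orderOf_eq_card_of_forall_mem_zpowers hg, Nat.card_eq_fintype_card]
  have hcardu : Fintype.card Fˣ = Fintype.card F - 1 := Fintype.card_units F
  have hNpos : 0 < (Fintype.card F - 1) / 3 := by
    have : 3 ≤ Fintype.card F - 1 := by omega
    exact Nat.div_pos this (by norm_num)
  refine ⟨((g ^ ((Fintype.card F - 1) / 3) : Fˣ) : F), ?_, ?_⟩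
  · have : (g ^ ((Fintype.card F - 1) / 3)) ^ 3 = 1 := by
      rw [← pow_mul, Nat.div_mul_cancel h3, ← hcardu, ← hord]
      exact pow_orderOf_eq_one g
    rw [← Units.val_pow_eq_pow_val, this, Units.val_one]
  · intro hc
    have hu1 : g ^ ((Fintype.card F - 1) / 3) = 1 :=
      Units.ext (by rw [Units.val_pow_eq_pow_val]; exact hc)
    have hdvd := orderOf_dvd_of_pow_eq_one hu1
    rw [hord, hcardu] at hdvd
    have hle := Nat.le_of_dvd hNpos hdvd
    have hlt : (Fintype.card F - 1) / 3 < Fintype.card F - 1 :=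
      Nat.div_lt_self (by omega) (by norm_num)
    omega

private lemma sum_cube_roots {F : Type} [Field F] {q : ℕ}
    (hq2 : 2 ≤ q) (h2 : (2 : F) = 0) (hd : 3 ∣ 2 * q - 1)
    [Fintype F] [DecidableEq F]
    (ζ : F) (hζ3 : ζ ^ 3 = 1) (hζ1 : ζ ≠ 1)
    (c : F) (hc : c ^ q = c) (I : ℕ) :
    ∑ a ∈ univ.filter (fun a : F => a ^ 3 = c), a ^ I =
      if 3 ∣ I then c ^ (I / 3) else 0 := by
  have hζq : ζ ^ 2 + ζ + 1 = 0 := by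
    have hfac : (ζ - 1) * (ζ ^ 2 + ζ + 1) = 0 := by linear_combination hζ3
    exact (mul_eq_zero.mp hfac).resolve_left (sub_ne_zero.mpr hζ1)
  have hζ0 : ζ ≠ 0 := by
    intro h; rw [h] at hζ3; simp at hζ3
  have hζ2ne1 : ζ ^ 2 ≠ 1 := by
    intro h
    apply hζ1
    have h3 : ζ ^ 3 = ζ ^ 2 * ζ := by ring
    rw [h3, h, one_mul] at hζ3; exact hζ3
  have hζζ2 : ζ ≠ ζ ^ 2 := by
    intro h
    apply hζ1
    exact (mul_left_cancel₀ hζ0 (by rw [mul_one, ← sq, ← h])).symm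
  by_cases hc0 : c = 0
  · subst hc0
    have hset : univ.filter (fun a : F => a ^ 3 = 0) = {0} := by
      ext a
      simp [pow_eq_zero_iff]
    rw [hset, sum_singleton]
    rcases Nat.eq_zero_or_pos I with hI | hI
    · subst hI; simp
    · rw [zero_pow hI.ne']
      split_ifs with h3I
      · have : 0 < I / 3 := Nat.div_pos (Nat.le_of_dvd hI h3I) (by norm_num)
        rw [zero_pow this.ne']
      · rfl
  · obtain ⟨u, hu3⟩ := hd
    set a₀ := c ^ u with ha₀def
    have hq1 : (q - 1) + 1 = q := by omega
    have hcq1 : c ^ (q - 1) = 1 := by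
      have h' : c ^ (q - 1) * c = 1 * c := by
        rw [← pow_succ, hq1, hc, one_mul]
      exact mul_right_cancel₀ hc0 h'
    have ha₀ : a₀ ^ 3 = c := by
      rw [ha₀def, ← pow_mul]
      have hm : u * 3 = (q - 1) + ((q - 1) + 1) := by omega
      rw [hm, pow_add, hcq1, one_mul, pow_succ, hcq1, one_mul]
    have ha₀0 : a₀ ≠ 0 := by
      intro h
      apply hc0
      rw [← ha₀, h, zero_pow (by norm_num : (3:ℕ) ≠ 0)]
    clear_value a₀
    have hset : univ.filter (fun a : F => a ^ 3 = c) = {a₀, a₀ * ζ, a₀ * ζ ^ 2} := by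
      ext a
      simp only [mem_filter, mem_univ, true_and, mem_insert, mem_singleton]
      constructor
      · intro h3a
        have hfac : (a - a₀) * (a - a₀ * ζ) * (a - a₀ * ζ ^ 2) = 0 := by
          linear_combination h3a + (a₀ ^ 2 * a - a₀ * a ^ 2) * hζq +
            (a₀ ^ 2 * a - c) * hζ3 - ζ ^ 3 * ha₀
        rcases mul_eq_zero.mp hfac with h | h
        · rcases mul_eq_zero.mp h with h' | h'
          · exact Or.inl (sub_eq_zero.mp h')
          · exact Or.inr (Or.inl (sub_eq_zero.mp h'))
        · exact Or.inr (Or.inr (sub_eq_zero.mp h))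
      · rintro (rfl | rfl | rfl)
        · exact ha₀
        · rw [mul_pow, ha₀, hζ3, mul_one]
        · rw [mul_pow, ha₀, ← pow_mul]
          have h23 : ζ ^ (2 * 3) = (ζ ^ 3) ^ 2 := by ring
          rw [h23, hζ3, one_pow, mul_one]
    rw [hset]
    have hne1 : a₀ ≠ a₀ * ζ := by
      intro h; exact hζ1 (mul_left_cancel₀ ha₀0 (by rw [← h, mul_one])).symm
    have hne2 : a₀ ≠ a₀ * ζ ^ 2 := by
      intro h; exact hζ2ne1 (mul_left_cancel₀ ha₀0 (by rw [← h, mul_one])).symm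
    have hne3 : a₀ * ζ ≠ a₀ * ζ ^ 2 := by
      intro h; exact hζζ2 (mul_left_cancel₀ ha₀0 h)
    rw [sum_insert (by simp [hne1, hne2]), sum_insert (by simp [hne3]), sum_singleton]
    have hζI : ζ ^ I = ζ ^ (I % 3) := by
      conv_lhs => rw [← Nat.div_add_mod I 3]
      rw [pow_add, pow_mul, hζ3, one_pow, one_mul]
    have hexp : a₀ ^ I + ((a₀ * ζ) ^ I + (a₀ * ζ ^ 2) ^ I)
        = a₀ ^ I * (1 + ζ ^ I + (ζ ^ I) ^ 2) := by ring
    rw [hexp, hζI]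
    split_ifs with h3I
    · obtain ⟨e, rfl⟩ := h3I
      have hmod : 3 * e % 3 = 0 := by omega
      have hdiv : 3 * e / 3 = e := by omega
      rw [hmod, hdiv, pow_zero]
      have h111 : (1 : F) + 1 + 1 ^ 2 = 1 := by
        rw [one_pow, show (1:F) + 1 = 2 by norm_num, h2, zero_add]
      rw [h111, mul_one, ← ha₀, ← pow_mul]
    · have hr : I % 3 = 1 ∨ I % 3 = 2 := by omega
      rcases hr with hr | hr
      · rw [hr, pow_one]
        have hz : 1 + ζ + ζ ^ 2 = 0 := by linear_combination hζq
        rw [hz, mul_zero]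
      · rw [hr]
        have h4 : (ζ ^ 2) ^ 2 = ζ ^ 3 * ζ := by ring
        rw [h4, hζ3, one_mul]
        have hz : 1 + ζ ^ 2 + ζ = 0 := by linear_combination hζq
        rw [hz, mul_zero]

private lemma main_sum {F : Type} [Field F] [Fintype F] [DecidableEq F] {q s : ℕ}
    (hq2 : 2 ≤ q) (hqs : q = 2 ^ s) (hchar : CharP F 2)
    (hF : Fintype.card F = q ^ 2) (hd : 3 ∣ 2 * q - 1)
    (ζ : F) (hζ3 : ζ ^ 3 = 1) (hζ1 : ζ ≠ 1) (I J : ℕ)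
    (hIJ : q * I + 3 * J ≤ (3 * q - 4) * (q + 1)) :
    ∑ p ∈ univ.filter (fun p : F × F => p.2 ^ q + p.2 = p.1 ^ 3),
      p.1 ^ I * p.2 ^ J = 0 := by
  haveI := hchar
  haveI : Fact (Nat.Prime 2) := ⟨Nat.prime_two⟩
  have h2 : (2 : F) = 0 := by exact_mod_cast (CharP.cast_eq_zero F 2)
  have hfrob : ∀ x y : F, (x + y) ^ q = x ^ q + y ^ q := by
    intro x y
    rw [hqs]
    exact add_pow_char_pow x y 2 s
  have hc : ∀ b : F, (b ^ q + b) ^ q = b ^ q + b := by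
    intro b
    rw [hfrob, ← pow_mul]
    have hqq : q * q = q ^ 2 := (sq q).symm
    rw [hqq]
    have hbcard : b ^ q ^ 2 = b := by rw [← hF]; exact FiniteField.pow_card b
    rw [hbcard, add_comm]
  have key : ∀ b : F, (∑ a ∈ univ.filter (fun a : F => a ^ 3 = b ^ q + b), a ^ I)
      = if 3 ∣ I then (b ^ q + b) ^ (I / 3) else 0 :=
    fun b => sum_cube_roots hq2 h2 hd ζ hζ3 hζ1 (b ^ q + b) (hc b) I
  have step1 : ∑ p ∈ univ.filter (fun p : F × F => p.2 ^ q + p.2 = p.1 ^ 3),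
      p.1 ^ I * p.2 ^ J
      = ∑ b : F, (∑ a ∈ univ.filter (fun a : F => a ^ 3 = b ^ q + b), a ^ I) * b ^ J := by
    rw [sum_filter, Fintype.sum_prod_type_right]
    refine sum_congr rfl fun b _ => ?_
    rw [sum_mul, sum_filter]
    refine sum_congr rfl fun a _ => ?_
    by_cases h : a ^ 3 = b ^ q + b
    · rw [if_pos h, if_pos h.symm]
    · rw [if_neg h, if_neg fun h' => h h'.symm]
  rw [step1]
  by_cases h3I : 3 ∣ I
  · obtain ⟨e, rfl⟩ := h3I
    have hdiv : 3 * e / 3 = e := by omega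
    have step2 : ∀ b : F, (∑ a ∈ univ.filter (fun a : F => a ^ 3 = b ^ q + b),
        a ^ (3 * e)) * b ^ J = (b ^ q + b) ^ e * b ^ J := by
      intro b
      rw [key b, if_pos ⟨e, rfl⟩, hdiv]
    rw [sum_congr rfl fun b _ => step2 b]
    have step3 : ∀ b : F, (b ^ q + b) ^ e * b ^ J
        = ∑ k ∈ range (e + 1), (e.choose k : F) * b ^ (q * k + (e - k) + J) := by
      intro b
      rw [add_pow, sum_mul]
      refine sum_congr rfl fun k hk => ?_
      rw [← pow_mul, pow_add, pow_add]
      ring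
    rw [sum_congr rfl fun b _ => step3 b, sum_comm]
    refine sum_eq_zero fun k hk => ?_
    rw [← mul_sum]
    have hk' : k ≤ e := Nat.lt_succ_iff.mp (mem_range.mp hk)
    have hNle : q * k + (e - k) + J ≤ q * e + J := by
      have h1 : e - k ≤ q * (e - k) := Nat.le_mul_of_pos_left (e - k) (by omega)
      have h2 : q * k + q * (e - k) = q * e := by
        rw [← Nat.mul_add, Nat.add_sub_cancel' hk']
      omega
    have hbig : 3 * (q * e + J) ≤ (3 * q - 4) * (q + 1) := by
      calc 3 * (q * e + J) = q * (3 * e) + 3 * J := by ring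
        _ ≤ (3 * q - 4) * (q + 1) := hIJ
    have hcard1 : (3 * q - 4) * (q + 1) + 3 ≤ 3 * (q ^ 2 - 1) := by
      zify [show 4 ≤ 3 * q by omega, Nat.one_le_pow 2 q (by omega)]
      nlinarith [(by exact_mod_cast hq2 : (2:ℤ) ≤ (q:ℤ))]
    have hN : q * k + (e - k) + J < Fintype.card F - 1 := by
      rw [hF]
      have h3N : 3 * (q * k + (e - k) + J) + 3 ≤ 3 * (q ^ 2 - 1) := by
        have := Nat.mul_le_mul_left 3 hNle
        omega
      omega
    rw [FiniteField.sum_pow_lt_card_sub_one F _ hN, mul_zero]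
  · have step2 : ∀ b : F, (∑ a ∈ univ.filter (fun a : F => a ^ 3 = b ^ q + b),
        a ^ I) * b ^ J = 0 := by
      intro b
      rw [key b, if_neg h3I, zero_mul]
    rw [sum_congr rfl fun b _ => step2 b, sum_const_zero]

theorem second_curve_hermitian_self_orthogonal (t : ℕ) (q : ℕ) (hq : q = 2 ^ (2 * t + 1))
    (F : Type) [Field F] [Fintype F] (hF : Fintype.card F = q ^ 2)
    (n : ℕ) (hn : n = 3 * q ^ 2 - 2 * q)
    (pt : Fin n → F × F) (hinj : Function.Injective pt)
    (hrange : ∀ p : F × F, p ∈ Set.range pt ↔ p.2 ^ q + p.2 = p.1 ^ 3)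
    (C : ℕ → Submodule F (Fin n → F))
    (hC : ∀ m : ℕ, C m = Submodule.span F
      {v : Fin n → F | ∃ i j : ℕ, j ≤ q - 1 ∧ q * i + 3 * j ≤ m ∧
        v = fun k => (pt k).1 ^ i * (pt k).2 ^ j})
    (m : ℕ) (hm : m ≤ 3 * q - 4) :
    ∀ u ∈ C m, ∀ v ∈ C m, ∑ k, u k * (v k) ^ q = 0 := by
  letI : DecidableEq F := Classical.decEq F
  have hq2 : 2 ≤ q := by rw [hq]; exact Nat.one_lt_two_pow (by omega)
  have hq0 : q ≠ 0 := by omega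
  have hchar : CharP F 2 := char_two_of_card (s := 2 * (2 * t + 1))
    (by rw [hF, hq, ← pow_mul, mul_comm (2*t+1) 2])
  haveI := hchar
  have h2q : 2 * q = 4 ^ (t + 1) := by
    rw [hq]
    have : (4 : ℕ) ^ (t + 1) = 2 ^ (2 * (t + 1)) := by
      rw [show (4:ℕ) = 2 ^ 2 from rfl, ← pow_mul]
    rw [this, show 2 * (t + 1) = (2 * t + 1) + 1 by ring]
    ring
  have hd : 3 ∣ 2 * q - 1 := by
    have := Nat.sub_dvd_pow_sub_pow 4 1 (t + 1)
    simp only [one_pow] at this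
    rw [h2q]
    exact_mod_cast this
  have hd2 : 3 ∣ Fintype.card F - 1 := by
    rw [hF]
    have hq2pow : q ^ 2 = 4 ^ (2 * t + 1) := by
      rw [hq, ← pow_mul, show (4:ℕ) = 2 ^ 2 from rfl, ← pow_mul, mul_comm 2 (2*t+1)]
    rw [hq2pow]
    have := Nat.sub_dvd_pow_sub_pow 4 1 (2 * t + 1)
    simpa using this
  have hcard3 : 3 < Fintype.card F := by
    rw [hF]
    nlinarith [hq2]
  obtain ⟨ζ, hζ3, hζ1⟩ := exists_cube_root_unity hd2 hcard3
  -- core: orthogonality of monomial generators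
  have hmono : ∀ i₁ j₁ i₂ j₂ : ℕ, q * i₁ + 3 * j₁ ≤ m → q * i₂ + 3 * j₂ ≤ m →
      ∑ k, ((pt k).1 ^ i₁ * (pt k).2 ^ j₁) * ((pt k).1 ^ i₂ * (pt k).2 ^ j₂) ^ q = 0 := by
    intro i₁ j₁ i₂ j₂ h₁ h₂
    set I := i₁ + q * i₂ with hI
    set J := j₁ + q * j₂ with hJ
    have hterm : ∀ p : F × F, (p.1 ^ i₁ * p.2 ^ j₁) * (p.1 ^ i₂ * p.2 ^ j₂) ^ q
        = p.1 ^ I * p.2 ^ J := by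
      intro p
      rw [hI, hJ]
      ring
    have hbij : ∑ k, ((pt k).1 ^ i₁ * (pt k).2 ^ j₁) * ((pt k).1 ^ i₂ * (pt k).2 ^ j₂) ^ q
        = ∑ p ∈ univ.filter (fun p : F × F => p.2 ^ q + p.2 = p.1 ^ 3),
            p.1 ^ I * p.2 ^ J := by
      refine Finset.sum_bij (fun k _ => pt k) ?_ ?_ ?_ ?_
      · intro k _
        exact mem_filter.mpr ⟨mem_univ _, (hrange (pt k)).mp ⟨k, rfl⟩⟩
      · intro k₁ _ k₂ _ h
        exact hinj h
      · intro p hp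
        obtain ⟨k, hk⟩ := (hrange p).mpr (mem_filter.mp hp).2
        exact ⟨k, mem_univ k, hk⟩
      · intro k _
        exact hterm (pt k)
    rw [hbij]
    refine main_sum hq2 hq hchar hF hd ζ hζ3 hζ1 I J ?_
    have hle : q * I + 3 * J = (q * i₁ + 3 * j₁) + q * (q * i₂ + 3 * j₂) := by
      rw [hI, hJ]; ring
    calc q * I + 3 * J = (q * i₁ + 3 * j₁) + q * (q * i₂ + 3 * j₂) := hle
      _ ≤ (3 * q - 4) + q * (3 * q - 4) := by
          exact Nat.add_le_add (h₁.trans hm) (Nat.mul_le_mul_left q (h₂.trans hm))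
      _ = (3 * q - 4) * (q + 1) := by ring
  intro u hu v hv
  rw [hC] at hu hv
  set S := {v : Fin n → F | ∃ i j : ℕ, j ≤ q - 1 ∧ q * i + 3 * j ≤ m ∧
      v = fun k => (pt k).1 ^ i * (pt k).2 ^ j} with hS
  -- inner induction: for u a generator
  have inner : ∀ u' ∈ S, ∀ w, w ∈ Submodule.span F S → ∑ k, u' k * w k ^ q = 0 := by
    rintro u' ⟨i₁, j₁, _, h₁, rfl⟩ w hw
    induction hw using Submodule.span_induction with
    | mem x hx =>
        obtain ⟨i₂, j₂, _, h₂, rfl⟩ := hx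
        exact hmono i₁ j₁ i₂ j₂ h₁ h₂
    | zero => simp [zero_pow hq0]
    | add x y hx hy ihx ihy =>
        have : ∀ k, (x + y) k ^ q = x k ^ q + y k ^ q := by
          intro k
          rw [Pi.add_apply, hq]
          exact add_pow_char_pow (x k) (y k) 2 (2 * t + 1)
        simp only [this, mul_add, sum_add_distrib, ihx, ihy, add_zero]
    | smul c x hx ihx =>
        have : ∀ k, (c • x) k ^ q = c ^ q * x k ^ q := by
          intro k
          rw [Pi.smul_apply, smul_eq_mul, mul_pow]
        simp only [this]
        calc ∑ k, (fun k => (pt k).1 ^ i₁ * (pt k).2 ^ j₁) k * (c ^ q * x k ^ q)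
            = c ^ q * ∑ k, (fun k => (pt k).1 ^ i₁ * (pt k).2 ^ j₁) k * x k ^ q := by
              rw [mul_sum]; exact sum_congr rfl fun k _ => by ring
          _ = 0 := by rw [ihx, mul_zero]
  -- outer induction on u
  induction hu using Submodule.span_induction with
  | mem x hx => exact inner x hx v hv
  | zero => simp
  | add x y hx hy ihx ihy =>
      simp only [Pi.add_apply, add_mul, sum_add_distrib, ihx, ihy, add_zero]
  | smul c x hx ihx =>
      have : ∀ k, (c • x) k * v k ^ q = c * (x k * v k ^ q) := by
        intro k; rw [Pi.smul_apply, smul_eq_mul, mul_assoc]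
      simp only [this, ← mul_sum, ihx, mul_zero]
end

section
/- Let q = 2^{2t+1} be an odd power of 2, F = 𝔽_{q²}, n = 3q² − 2q, and let (a₁,b₁),…,(a_n,b_n) be an enumeration of all pairs in F × F with (b_k)^q + b_k = (a_k)³. For a nonnegative integer m let C_m ⊆ F^n be the F-linear span of the vectors ((a_k)^i (b_k)^j)_{k=1,…,n} over all pairs (i,j) of nonnegative integers with j ≤ q − 1 and qi + 3j ≤ m. If m ≥ 2q − 3, then every nonzero vector in the Hermitian dual C_m^{⊥H} = {v ∈ F^n : Σ_k v_k (c_k)^q = 0 for all c ∈ C_m} has Hamming weight at least m − 2q + 4. -/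
/-!
Put `w = v ^ q`. As `x ↦ x ^ q` is an involution of `𝔽_{q²}`, `v ∈ C_mᗮᴴ` says that the syndromes
`s i j = ∑ₖ wₖ xₖ ^ i yₖ ^ j` vanish for `j < q`, `q i + 3 j ≤ m`. The curve equation
`y ^ q = x ^ 3 - y` rewrites any monomial as one with `j < q` and the same weight `q i + 3 j`,
up to monomials of lower weight. Monomials separate the points, so some syndrome is nonzero;
let `ρ > m` be the least weight of one. Below `ρ` all syndromes vanish, and at weight `ρ` they all
equal one nonzero value, because reduced monomials have distinct weights (`gcd q 3 = 1`).
For each of the at least `ρ + 1 - 2 (q - 1)` weights `α ≤ ρ` with `ρ - α` also a weight, pick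
monomials `f α` and `h α` of weights `α` and `ρ - α`. The matrix `(w ⬝ᵥ (f β * h α))` is triangular
with nonzero diagonal and factors through `diagonal w`, so its size is at most the number of
nonzero entries of `w`, which is that of `v` (the Feng–Rao bound).
-/

open Finset Matrix

theorem Nat.eq_and_eq_of_mul_add_mul_eq {a b i j i' j' : ℕ} (hab : Nat.Coprime a b)
    (hj : j < a) (hj' : j' < a) (h : a * i + b * j = a * i' + b * j') : i = i' ∧ j = j' := by
  have hmod : b * j ≡ b * j' [MOD a] := by
    simpa [Nat.ModEq, Nat.add_mul_mod_self_left] using congrArg (· % a) h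
  have hjj : j = j' := (Nat.ModEq.cancel_left_of_coprime hab hmod).eq_of_lt_of_lt hj hj'
  subst hjj
  exact ⟨Nat.eq_of_mul_eq_mul_left (by omega) (Nat.add_right_cancel h), rfl⟩

/-- `q * i + 3 * j` is the pole order at infinity of `x ^ i * y ^ j`, so `monomialWeights q 3` is
the Weierstrass semigroup of the point at infinity; its `q - 1` gaps are the genus. -/
def monomialWeights (a b : ℕ) : Set ℕ := {N | ∃ i j : ℕ, a * i + b * j = N}

open Classical in
theorem card_filter_not_mem_monomialWeights_le {q : ℕ} (hq : q % 3 = 2) (R : ℕ) :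
    #{N ∈ range R | N ∉ monomialWeights q 3} ≤ q - 1 := by
  have hsub : {N ∈ range R | N ∉ monomialWeights q 3} ⊆
      (range (q / 3)).image (3 * · + 2) ∪ (range (2 * (q / 3) + 1)).image (3 * · + 1) := by
    intro N hN
    simp only [mem_filter, monomialWeights, Set.mem_ofPred_eq, not_exists] at hN
    have h0 := hN.2 0 (N / 3)
    have h1 := hN.2 1 ((N - q) / 3)
    have h2 := hN.2 2 ((N - 2 * q) / 3)
    simp only [mem_union, mem_image, mem_range]
    rcases (by omega : N % 3 = 1 ∨ N % 3 = 2) with h | h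
    · exact .inr ⟨N / 3, by omega, by omega⟩
    · exact .inl ⟨N / 3, by omega, by omega⟩
  calc #{N ∈ range R | N ∉ monomialWeights q 3}
      ≤ #((range (q / 3)).image (3 * · + 2)) + #((range (2 * (q / 3) + 1)).image (3 * · + 1)) :=
        (card_le_card hsub).trans (card_union_le _ _)
    _ ≤ q / 3 + (2 * (q / 3) + 1) := by
        gcongr <;> exact card_image_le.trans (card_range _).le
    _ = q - 1 := by omega

theorem succ_le_card_filter_and_sub_add (P : ℕ → Prop) [DecidablePred P] (ρ : ℕ) :
    ρ + 1 ≤ #{α ∈ range (ρ + 1) | P α ∧ P (ρ - α)} + 2 * #{α ∈ range (ρ + 1) | ¬ P α} := by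
  have hrefl : #{α ∈ range (ρ + 1) | ¬ P (ρ - α)} ≤ #{α ∈ range (ρ + 1) | ¬ P α} := by
    refine card_le_card_of_injOn (ρ - ·) (fun α hα => ?_) (fun α hα β hβ h => ?_)
    · simp only [coe_filter, mem_range, Set.mem_ofPred_eq] at hα ⊢
      exact ⟨by omega, hα.2⟩
    · simp only [coe_filter, mem_range, Set.mem_ofPred_eq] at hα hβ h
      omega
  have hcover : #{α ∈ range (ρ + 1) | ¬ (P α ∧ P (ρ - α))}
      ≤ #{α ∈ range (ρ + 1) | ¬ P α} + #{α ∈ range (ρ + 1) | ¬ P (ρ - α)} := by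
    refine le_of_eq_of_le ?_ (card_union_le _ _)
    rw [← filter_or]
    simp_rw [not_and_or]
  have := card_filter_add_card_filter_not (s := range (ρ + 1)) (fun α => P α ∧ P (ρ - α))
  rw [card_range] at this
  omega

section Recurrence

variable {G : Type*} [AddGroup G] {q ρ : ℕ} {s : ℕ → ℕ → G}

theorem eq_zero_of_weight_lt_of_reduced (hq : 1 < q)
    (hs : ∀ i j, s i (j + q) = s (i + 3) j - s i (j + 1))
    (h : ∀ i j, j < q → q * i + 3 * j < ρ → s i j = 0) (i j : ℕ) (hij : q * i + 3 * j < ρ) :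
    s i j = 0 := by
  induction j using Nat.strong_induction_on generalizing i with
  | _ j ih =>
    rcases lt_or_ge j q with hjq | hjq
    · exact h i j hjq hij
    obtain ⟨j, rfl⟩ := Nat.exists_eq_add_of_le' hjq
    rw [hs, ih j (by omega) (i + 3) (by linarith), ih (j + 1) (by omega) i (by linarith), sub_zero]

theorem eq_reduce_of_weight_eq (hq : 1 < q)
    (hs : ∀ i j, s i (j + q) = s (i + 3) j - s i (j + 1))
    (h : ∀ i j, q * i + 3 * j < ρ → s i j = 0) (i j : ℕ) (hij : q * i + 3 * j = ρ) :
    s i j = s (i + 3 * (j / q)) (j % q) := by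
  induction j using Nat.strong_induction_on generalizing i with
  | _ j ih =>
    rcases lt_or_ge j q with hjq | hjq
    · rw [Nat.div_eq_of_lt hjq, Nat.mod_eq_of_lt hjq, mul_zero, add_zero]
    obtain ⟨j, rfl⟩ := Nat.exists_eq_add_of_le' hjq
    rw [hs, h i (j + 1) (by linarith), sub_zero, ih j (by omega) (i + 3) (by linarith),
      Nat.add_div_right _ (by omega), Nat.add_mod_right]
    ring_nf

theorem eq_of_weight_eq (hq : 1 < q) (hq3 : Nat.Coprime q 3)
    (hs : ∀ i j, s i (j + q) = s (i + 3) j - s i (j + 1))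
    (h : ∀ i j, q * i + 3 * j < ρ → s i j = 0) {i j i' j' : ℕ} (hij : q * i + 3 * j = ρ)
    (hij' : q * i' + 3 * j' = ρ) : s i j = s i' j' := by
  have hred : ∀ i j, q * (i + 3 * (j / q)) + 3 * (j % q) = q * i + 3 * j := fun i j => by
    conv_rhs => rw [← Nat.div_add_mod j q]
    ring
  obtain ⟨hi, hj⟩ := Nat.eq_and_eq_of_mul_add_mul_eq hq3 (Nat.mod_lt j (by omega))
    (Nat.mod_lt j' (by omega)) ((hred i j).trans (hij.trans (hij'.symm.trans (hred i' j').symm)))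
  rw [eq_reduce_of_weight_eq hq hs h i j hij, eq_reduce_of_weight_eq hq hs h i' j' hij', hi, hj]

end Recurrence

theorem Subalgebra.eq_top_of_separatesPoints {K ι : Type*} [Field K] [Finite ι]
    (A : Subalgebra K (ι → K)) (hA : (A : Set (ι → K)).SeparatesPoints) : A = ⊤ := by
  classical
  have := Fintype.ofFinite ι
  have hsingle : ∀ a, Pi.single a 1 ∈ A := by
    intro a
    have hsep : ∀ b, b ≠ a → ∃ e ∈ A, e a = 1 ∧ e b = 0 := by
      intro b hba
      obtain ⟨f, hfA, hf⟩ := hA hba.symm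
      refine ⟨(f a - f b)⁻¹ • (f - algebraMap K _ (f b)),
        A.smul_mem (A.sub_mem hfA (A.algebraMap_mem _)) _, ?_, ?_⟩
      · simp [sub_ne_zero.mpr hf]
      · simp
    choose! e heA he using hsep
    convert A.prod_mem (t := univ.erase a) fun b hb => heA b (ne_of_mem_erase hb) using 1
    ext k
    rw [Finset.prod_apply]
    rcases eq_or_ne k a with rfl | hka
    · simp [prod_eq_one (fun b hb => (he b (ne_of_mem_erase hb)).1)]
    · rw [Pi.single_eq_of_ne hka]
      exact (prod_eq_zero (f := fun c => e c k) (mem_erase.mpr ⟨hka, mem_univ k⟩) (he k hka).2).symm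
  refine eq_top_iff.mpr fun f _ => ?_
  rw [← univ_sum_single f]
  refine A.sum_mem fun a _ => ?_
  convert A.smul_mem (hsingle a) (f a) using 1
  ext
  simp [Pi.single_apply]

theorem card_le_card_support_of_triangular_pairing {K ι κ : Type*} [Field K]
    [Fintype ι] [Fintype κ] [LinearOrder κ] (w : ι → K) (f h : κ → ι → K)
    (hlow : ∀ α β, β < α → w ⬝ᵥ (f β * h α) = 0) (hdiag : ∀ α, w ⬝ᵥ (f α * h α) ≠ 0) :
    Fintype.card κ ≤ Nat.card {k // w k ≠ 0} := by
  classical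
  set M : Matrix κ κ K := of h * diagonal w * (of f)ᵀ
  have hM : ∀ α β, M α β = w ⬝ᵥ (f β * h α) := by
    intro α β
    simp only [M]
    rw [mul_apply]
    simp only [mul_diagonal, of_apply, transpose_apply, dotProduct, Pi.mul_apply]
    exact sum_congr rfl fun k _ => by ring
  have hdet : M.det ≠ 0 := by
    rw [det_of_isUpperTriangular fun α β hβα => (hM α β).trans (hlow α β hβα)]
    exact prod_ne_zero_iff.mpr fun α _ => (hM α α).trans_ne (hdiag α)
  calc Fintype.card κ = M.rank :=
        (rank_of_isUnit M ((isUnit_iff_isUnit_det M).mpr hdet.isUnit)).symm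
    _ ≤ (of h * diagonal w).rank := rank_mul_le_left _ _
    _ ≤ (diagonal w).rank := rank_mul_le_right _ _
    _ = Nat.card {k // w k ≠ 0} := by rw [rank_diagonal, Nat.card_eq_fintype_card]

section Monomials

variable {K ι : Type*} [Field K]

def monomialVec (pt : ι → K × K) (i j : ℕ) : ι → K := fun k => (pt k).1 ^ i * (pt k).2 ^ j

theorem monomialVec_add (pt : ι → K × K) (i j i' j' : ℕ) :
    monomialVec pt (i + i') (j + j') = monomialVec pt i j * monomialVec pt i' j' := by
  ext k
  simp only [monomialVec, Pi.mul_apply]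
  ring

theorem monomialVec_add_of_curve {q : ℕ} {pt : ι → K × K}
    (hcurve : ∀ k, (pt k).2 ^ q + (pt k).2 = (pt k).1 ^ 3) (i j : ℕ) :
    monomialVec pt i (j + q) = monomialVec pt (i + 3) j - monomialVec pt i (j + 1) := by
  ext k
  simp only [monomialVec, Pi.sub_apply, pow_add, eq_sub_of_add_eq (hcurve k)]
  ring

theorem eq_zero_of_dotProduct_monomialVec_eq_zero [Fintype ι] {pt : ι → K × K}
    (hpt : Function.Injective pt) {w : ι → K} (hw : ∀ i j, w ⬝ᵥ monomialVec pt i j = 0) :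
    w = 0 := by
  classical
  set A := Algebra.adjoin K {fun k => (pt k).1, fun k => (pt k).2}
  have hA : A = ⊤ := by
    refine Subalgebra.eq_top_of_separatesPoints A fun a b hab => ?_
    by_cases h1 : (pt a).1 = (pt b).1
    · exact ⟨_, Algebra.subset_adjoin (.inr rfl), fun h2 => hab (hpt (Prod.ext h1 h2))⟩
    · exact ⟨_, Algebra.subset_adjoin (.inl rfl), h1⟩
  have horth : ∀ f ∈ Subalgebra.toSubmodule A, w ⬝ᵥ f = 0 := by
    intro f hf
    rw [Algebra.adjoin_eq_span] at hf
    induction hf using Submodule.span_induction with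
    | mem f hf =>
      obtain ⟨i, j, rfl⟩ := (Submonoid.mem_closure_pair _ _ _).mp hf
      exact hw i j
    | zero => exact dotProduct_zero w
    | add f g _ _ hf hg => rw [dotProduct_add, hf, hg, add_zero]
    | smul c f _ hf => rw [dotProduct_smul, hf, smul_zero]
  ext k
  simpa using horth (Pi.single k 1) (by simp [hA])

open Classical in
theorem card_filter_monomialWeights_le_card_support [Fintype ι] {a b ρ : ℕ} (pt : ι → K × K)
    (w : ι → K) (hlt : ∀ i j, a * i + b * j < ρ → w ⬝ᵥ monomialVec pt i j = 0)
    (heq : ∀ i j, a * i + b * j = ρ → w ⬝ᵥ monomialVec pt i j ≠ 0) :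
    #{α ∈ range (ρ + 1) | α ∈ monomialWeights a b ∧ ρ - α ∈ monomialWeights a b}
      ≤ Nat.card {k // w k ≠ 0} := by
  choose! I J hIJ using fun N (hN : N ∈ monomialWeights a b) => hN
  set D := {α ∈ range (ρ + 1) | α ∈ monomialWeights a b ∧ ρ - α ∈ monomialWeights a b}
  have hle : ∀ α ∈ D, α ≤ ρ := fun α hα => Nat.lt_succ_iff.mp (mem_range.mp (mem_filter.mp hα).1)
  have hweight : ∀ α ∈ D, ∀ β ∈ D,
      a * (I β + I (ρ - α)) + b * (J β + J (ρ - α)) = β + (ρ - α) := by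
    intro α hα β hβ
    have := hIJ β (mem_filter.mp hβ).2.1
    have := hIJ (ρ - α) (mem_filter.mp hα).2.2
    linarith
  simpa using card_le_card_support_of_triangular_pairing (κ := D) w
    (fun β => monomialVec pt (I β) (J β)) (fun α => monomialVec pt (I (ρ - α)) (J (ρ - α)))
    (fun α β (hβα : (β : ℕ) < α) => by
      rw [← monomialVec_add]
      exact hlt _ _ ((hweight α α.2 β β.2).trans_lt (by have := hle α α.2; omega)))
    (fun α => by
      rw [← monomialVec_add]
      exact heq _ _ ((hweight α α.2 α α.2).trans (by have := hle α α.2; omega)))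

end Monomials

theorem sum_pow_mul_eq_sum_mul_pow_pow {F ι : Type*} [Field F] [Fintype F] {p k : ℕ}
    [ExpChar F p] (hF : Fintype.card F = (p ^ k) ^ 2) (s : Finset ι) (v c : ι → F) :
    ∑ i ∈ s, v i ^ p ^ k * c i = (∑ i ∈ s, v i * c i ^ p ^ k) ^ p ^ k := by
  rw [sum_pow_char_pow]
  refine sum_congr rfl fun i _ => ?_
  rw [mul_pow, ← pow_mul, ← sq, ← hF, FiniteField.pow_card]

theorem add_four_sub_two_mul_le_card_support {K ι : Type*} [Field K] [Fintype ι] {q m : ℕ}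
    (hq : q % 3 = 2) {pt : ι → K × K} (hpt : Function.Injective pt)
    (hcurve : ∀ k, (pt k).2 ^ q + (pt k).2 = (pt k).1 ^ 3) {w : ι → K} (hw : w ≠ 0)
    (hvan : ∀ i j, j < q → q * i + 3 * j ≤ m → w ⬝ᵥ monomialVec pt i j = 0) :
    m + 4 - 2 * q ≤ Nat.card {k // w k ≠ 0} := by
  classical
  have h1q : 1 < q := by omega
  have hcop : Nat.Coprime q 3 := by
    rw [Nat.coprime_comm, Nat.Prime.coprime_iff_not_dvd Nat.prime_three]
    omega
  have hrec : ∀ i j, w ⬝ᵥ monomialVec pt i (j + q)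
      = w ⬝ᵥ monomialVec pt (i + 3) j - w ⬝ᵥ monomialVec pt i (j + 1) := fun i j => by
    rw [monomialVec_add_of_curve hcurve, dotProduct_sub]
  have hex : ∃ N, ∃ i j, q * i + 3 * j = N ∧ w ⬝ᵥ monomialVec pt i j ≠ 0 := by
    by_contra! h
    exact hw (eq_zero_of_dotProduct_monomialVec_eq_zero hpt fun i j => h _ i j rfl)
  set ρ := Nat.find hex
  obtain ⟨i₀, j₀, hρ, hs₀⟩ : ∃ i j, q * i + 3 * j = ρ ∧ w ⬝ᵥ monomialVec pt i j ≠ 0 :=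
    Nat.find_spec hex
  have hlt : ∀ i j, q * i + 3 * j < ρ → w ⬝ᵥ monomialVec pt i j = 0 :=
    fun i j h => not_not.mp fun hne => Nat.find_min hex h ⟨i, j, rfl, hne⟩
  have heq : ∀ i j, q * i + 3 * j = ρ → w ⬝ᵥ monomialVec pt i j ≠ 0 :=
    fun i j h => (eq_of_weight_eq h1q hcop hrec hlt h hρ).trans_ne hs₀
  have hmρ : m < ρ := by
    by_contra! h
    exact hs₀ (eq_zero_of_weight_lt_of_reduced h1q hrec (ρ := m + 1)
      (fun i j hj hij => hvan i j hj (by omega)) i₀ j₀ (by omega))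
  have hD := card_filter_monomialWeights_le_card_support pt w hlt heq
  have hcount := succ_le_card_filter_and_sub_add (· ∈ monomialWeights q 3) ρ
  have hgaps := card_filter_not_mem_monomialWeights_le hq (ρ + 1)
  omega

theorem second_curve_hermitian_dual_distance_general (t : ℕ) (q : ℕ) (hq : q = 2 ^ (2 * t + 1))
    (F : Type) [Field F] [Fintype F] (hF : Fintype.card F = q ^ 2)
    (n : ℕ)
    (pt : Fin n → F × F) (hinj : Function.Injective pt)
    (hrange : ∀ p : F × F, p ∈ Set.range pt ↔ p.2 ^ q + p.2 = p.1 ^ 3)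
    (C : ℕ → Submodule F (Fin n → F))
    (hC : ∀ m : ℕ, C m = Submodule.span F
      {v : Fin n → F | ∃ i j : ℕ, j ≤ q - 1 ∧ q * i + 3 * j ≤ m ∧
        v = fun k => (pt k).1 ^ i * (pt k).2 ^ j})
    (m : ℕ) :
    ∀ v ∈ {v : Fin n → F | ∀ c ∈ C m, ∑ k, v k * (c k) ^ q = 0}, v ≠ 0 →
      m + 4 - 2 * q ≤ Nat.card {k : Fin n // v k ≠ 0} := by
  intro v hv hv0
  have hq0 : q ≠ 0 := by rw [hq]; positivity
  have hq3 : q % 3 = 2 := by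
    rw [hq, pow_succ, pow_mul, Nat.mul_mod, Nat.pow_mod]
    norm_num
  have hF' : Fintype.card F = (2 ^ (2 * t + 1)) ^ 2 := hq ▸ hF
  have : CharP F 2 := charP_of_card_eq_prime_pow (hF'.trans (pow_mul 2 _ 2).symm)
  rw [Nat.card_congr (Equiv.subtypeEquivRight fun k => (pow_ne_zero_iff hq0 (a := v k)).symm)]
  refine add_four_sub_two_mul_le_card_support hq3 hinj (fun k => (hrange _).1 ⟨k, rfl⟩)
    (fun h => hv0 (funext fun k => (pow_eq_zero_iff hq0).mp (congrFun h k))) fun i j hj hij => ?_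
  have hc := hv (monomialVec pt i j) (by
    rw [hC]
    exact Submodule.subset_span ⟨i, j, by omega, hij, rfl⟩)
  rw [dotProduct, hq, sum_pow_mul_eq_sum_mul_pow_pow hF', ← hq, hc, zero_pow hq0]

theorem second_curve_hermitian_dual_distance (t : ℕ) (q : ℕ) (hq : q = 2 ^ (2 * t + 1))
    (F : Type) [Field F] [Fintype F] (hF : Fintype.card F = q ^ 2)
    (n : ℕ) (hn : n = 3 * q ^ 2 - 2 * q)
    (pt : Fin n → F × F) (hinj : Function.Injective pt)
    (hrange : ∀ p : F × F, p ∈ Set.range pt ↔ p.2 ^ q + p.2 = p.1 ^ 3)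
    (C : ℕ → Submodule F (Fin n → F))
    (hC : ∀ m : ℕ, C m = Submodule.span F
      {v : Fin n → F | ∃ i j : ℕ, j ≤ q - 1 ∧ q * i + 3 * j ≤ m ∧
        v = fun k => (pt k).1 ^ i * (pt k).2 ^ j})
    (m : ℕ) (hm : 2 * q - 3 ≤ m) :
    ∀ v ∈ {v : Fin n → F | ∀ c ∈ C m, ∑ k, v k * (c k) ^ q = 0}, v ≠ 0 →
      m + 4 - 2 * q ≤ Nat.card {k : Fin n // v k ≠ 0} :=
  second_curve_hermitian_dual_distance_general t q hq F hF n pt hinj hrange C hC m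
end
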